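/- arXiv:0811.3617 — 7 statements merged into one kernel-verified Lean document; each statement's English description precedes it below -/
import Mathlib

section
/- Let S = ∏_{j=1}^n [c_j, c_j + Δ_j] ⊂ ℝⁿ be a rectangular cell with edge lengths Δ_j > 0, and let g : S → ℝ be continuous and such that for each j ∈ {1,…,n} and all x, x' ∈ S differing only in the j-th coordinate, |g(x) − g(x')| ≤ b_j·|x_j − x'_j|. If X is uniformly distributed on S, then Var(g(X)) ≤ ∑_{j=1}^n b_j²·Δ_j²/12. -/
/-!
Integrating out one coordinate splits the variance of `g(X)` into the mean conditional variance
in that coordinate plus the variance of the conditional mean. A `b`-Lipschitz function of a real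
random variable `U` has variance at most `b² Var U`, and the conditional mean is again
coordinatewise Lipschitz with the remaining constants, so induction on the dimension bounds
`Var g(X)` by `∑ b_j² Var X_j`; for `X_j` uniform on an interval of length `Δ_j`,
`Var X_j = Δ_j² / 12`. To apply this, `g` is first extended from the cell to all of `ℝⁿ` by
composing with the coordinatewise projection onto the cell.
-/

open MeasureTheory ProbabilityTheory Set Function
open scoped NNReal ENNReal

lemma LipschitzWith.memLp_comp {Ω E F : Type*} {mΩ : MeasurableSpace Ω} {μ : Measure Ω}
    [IsFiniteMeasure μ] [NormedAddCommGroup E] [NormedAddCommGroup F] {K : ℝ≥0} {f : E → F}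
    (hf : LipschitzWith K f) {p : ℝ≥0∞} {X : Ω → E} (hX : MemLp X p μ) :
    MemLp (fun ω ↦ f (X ω)) p μ := by
  have h0 : MemLp (fun ω ↦ f (X ω) - f 0) p μ :=
    (hf.sub (LipschitzWith.const (f 0))).comp_memLp (sub_self _) hX
  convert h0.add (memLp_const (f 0)) using 1
  ext ω
  simp

section Variance

variable {Ω : Type*} {mΩ : MeasurableSpace Ω} {μ : Measure Ω} [IsProbabilityMeasure μ]

lemma variance_le_integral_sub_sq {X : Ω → ℝ} (hX : AEStronglyMeasurable X μ) (c : ℝ) :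
    Var[X; μ] ≤ ∫ ω, (X ω - c) ^ 2 ∂μ := by
  rw [← variance_sub_const hX c]
  exact variance_le_expectation_sq (hX.sub aestronglyMeasurable_const)

lemma LipschitzWith.variance_comp_le {X : Ω → ℝ} (hX : MemLp X 2 μ) {K : ℝ≥0} {f : ℝ → ℝ}
    (hf : LipschitzWith K f) : Var[fun ω ↦ f (X ω); μ] ≤ K ^ 2 * Var[X; μ] := by
  have hXm : MemLp (fun ω ↦ X ω - μ[X]) 2 μ := hX.sub (memLp_const _)
  calc Var[fun ω ↦ f (X ω); μ]
      ≤ ∫ ω, (f (X ω) - f μ[X]) ^ 2 ∂μ :=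
        variance_le_integral_sub_sq (hf.continuous.comp_aestronglyMeasurable hX.1) _
    _ ≤ ∫ ω, K ^ 2 * (X ω - μ[X]) ^ 2 ∂μ := by
        refine integral_mono_of_nonneg (.of_forall fun _ ↦ sq_nonneg _)
          (hXm.integrable_sq.const_mul _) (.of_forall fun ω ↦ ?_)
        simpa only [Real.dist_eq, mul_pow, sq_abs] using
          pow_le_pow_left₀ dist_nonneg (hf.dist_le_mul (X ω) μ[X]) 2
    _ = K ^ 2 * Var[X; μ] := by
        rw [integral_const_mul, variance_eq_integral hX.1.aemeasurable]

end Variance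

lemma variance_prod_eq_integral_variance_add {α β : Type*} [MeasurableSpace α] [MeasurableSpace β]
    {ν : Measure α} {ρ : Measure β} [IsProbabilityMeasure ν] [IsProbabilityMeasure ρ]
    {f : α × β → ℝ} (hf : MemLp f 2 (ν.prod ρ)) :
    Var[f; ν.prod ρ] =
      ∫ y, Var[fun x ↦ f (x, y); ν] ∂ρ + Var[fun y ↦ ∫ x, f (x, y) ∂ν; ρ] := by
  set G : β → ℝ := fun y ↦ ∫ x, f (x, y) ∂ν
  have hsq : Integrable (fun z ↦ f z ^ 2) (ν.prod ρ) := hf.integrable_sq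
  have hvar : ∀ᵐ y ∂ρ, Var[fun x ↦ f (x, y); ν] = ∫ x, f (x, y) ^ 2 ∂ν - G y ^ 2 := by
    filter_upwards [hf.1.prodMk_right, hsq.prod_left_ae] with y hmeas hint
    exact variance_eq_sub ((memLp_two_iff_integrable_sq hmeas).2 hint)
  have hG : MemLp G 2 ρ := by
    have hGm : AEStronglyMeasurable G ρ :=
      (hf.integrable one_le_two).integral_prod_right.aestronglyMeasurable
    refine (memLp_two_iff_integrable_sq hGm).2 (hsq.integral_prod_right.mono' (hGm.pow 2) ?_)
    filter_upwards [hvar] with y hy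
    rw [Real.norm_of_nonneg (sq_nonneg _)]
    linarith [variance_nonneg (fun x ↦ f (x, y)) ν]
  rw [variance_eq_sub hf, variance_eq_sub hG, integral_congr_ae hvar,
    integral_sub hsq.integral_prod_right hG.integrable_sq]
  simp only [Pi.pow_apply]
  rw [integral_prod_symm _ hsq, integral_prod_symm _ (hf.integrable one_le_two)]
  ring

def CoordLipschitzWith {ι α β : Type*} [DecidableEq ι] [PseudoEMetricSpace α]
    [PseudoEMetricSpace β] (K : ι → ℝ≥0) (f : (ι → α) → β) : Prop :=
  ∀ x j, LipschitzWith (K j) fun t ↦ f (update x j t)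

namespace CoordLipschitzWith

section Metric

variable {ι α β : Type*} [DecidableEq ι] [Fintype ι] [PseudoMetricSpace α] [PseudoMetricSpace β]
  {K : ι → ℝ≥0} {f : (ι → α) → β}

lemma dist_le_sum (hf : CoordLipschitzWith K f) (x y : ι → α) :
    dist (f x) (f y) ≤ ∑ j, K j * dist (x j) (y j) := by
  -- change the coordinates of `y` into those of `x` one at a time
  suffices h : ∀ s : Finset ι, dist (f (s.piecewise x y)) (f y) ≤ ∑ j ∈ s, K j * dist (x j) (y j) by
    simpa using h Finset.univ
  intro s
  induction s using Finset.induction_on with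
  | empty => simp
  | insert j s hj ih =>
    rw [Finset.piecewise_insert, Finset.sum_insert hj]
    have hstep := (hf (s.piecewise x y) j).dist_le_mul (x j) (s.piecewise x y j)
    rw [update_eq_self, Finset.piecewise_eq_of_notMem _ _ _ hj] at hstep
    exact (dist_triangle _ _ _).trans (add_le_add hstep ih)

lemma lipschitzWith (hf : CoordLipschitzWith K f) : LipschitzWith (∑ j, K j) f := by
  refine LipschitzWith.of_dist_le_mul fun x y ↦ (hf.dist_le_sum x y).trans ?_
  rw [NNReal.coe_sum, Finset.sum_mul]
  gcongr with j
  exact dist_le_pi_dist x y j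

end Metric

lemma memLp_pi {ι : Type*} [DecidableEq ι] [Fintype ι] {K : ι → ℝ≥0} {f : (ι → ℝ) → ℝ}
    (hf : CoordLipschitzWith K f) {μ : ι → Measure ℝ} [∀ j, IsProbabilityMeasure (μ j)]
    (hμ : ∀ j, MemLp id 2 (μ j)) : MemLp f 2 (Measure.pi μ) :=
  hf.lipschitzWith.memLp_comp (X := id) <|
    memLp_pi_iff.2 fun j ↦ (hμ j).comp_measurePreserving (measurePreserving_eval μ j)

variable {n : ℕ} {K : Fin (n + 1) → ℝ≥0} {f : (Fin (n + 1) → ℝ) → ℝ}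

lemma lipschitzWith_cons (hf : CoordLipschitzWith K f) (y : Fin n → ℝ) :
    LipschitzWith (K 0) fun t ↦ f (Fin.cons t y) := by
  simpa only [Fin.update_cons_zero] using hf (Fin.cons 0 y) 0

lemma integral_cons (hf : CoordLipschitzWith K f) {ν : Measure ℝ} [IsProbabilityMeasure ν]
    (hν : Integrable id ν) :
    CoordLipschitzWith (fun j ↦ K j.succ) fun y ↦ ∫ x, f (Fin.cons x y) ∂ν := by
  intro y j
  have hint : ∀ t, Integrable (fun x ↦ f (Fin.cons x (update y j t))) ν := fun t ↦
    memLp_one_iff_integrable.1 ((hf.lipschitzWith_cons _).memLp_comp (X := id)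
      (memLp_one_iff_integrable.2 hν))
  refine LipschitzWith.of_dist_le_mul fun t s ↦ ?_
  rw [dist_eq_norm, ← integral_sub (hint t) (hint s)]
  have hbound : ∀ x, ‖f (Fin.cons x (update y j t)) - f (Fin.cons x (update y j s))‖ ≤
      K j.succ * dist t s := fun x ↦ by
    simpa only [Fin.cons_update, dist_eq_norm] using (hf (Fin.cons x y) j.succ).dist_le_mul t s
  simpa using norm_integral_le_of_norm_le_const (μ := ν) (.of_forall hbound)

theorem variance_pi_le {n : ℕ} {K : Fin n → ℝ≥0} {f : (Fin n → ℝ) → ℝ}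
    (hf : CoordLipschitzWith K f) {μ : Fin n → Measure ℝ} [∀ j, IsProbabilityMeasure (μ j)]
    (hμ : ∀ j, MemLp id 2 (μ j)) :
    Var[f; Measure.pi μ] ≤ ∑ j, (K j : ℝ) ^ 2 * Var[id; μ j] := by
  induction n with
  | zero => simp [Measure.pi_of_empty μ, variance_dirac]
  | succ n ih =>
    have he : MeasurePreserving (fun p : ℝ × (Fin n → ℝ) ↦ (Fin.cons p.1 p.2 : Fin (n + 1) → ℝ))
        ((μ 0).prod (Measure.pi fun j : Fin n ↦ μ j.succ)) (Measure.pi μ) := by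
      simpa [MeasurableEquiv.piFinSuccAbove_symm_apply, Fin.insertNthEquiv, Fin.insertNth_zero']
        using (measurePreserving_piFinSuccAbove μ 0).symm
    have hfm := hf.memLp_pi hμ
    have hvar : Var[fun p : ℝ × (Fin n → ℝ) ↦ f (Fin.cons p.1 p.2); (μ 0).prod _] =
        Var[f; Measure.pi μ] := he.variance_fun_comp hfm.1.aemeasurable
    have hFm : MemLp (fun p : ℝ × (Fin n → ℝ) ↦ f (Fin.cons p.1 p.2)) 2 ((μ 0).prod _) :=
      hfm.comp_measurePreserving he
    rw [← hvar, variance_prod_eq_integral_variance_add hFm, Fin.sum_univ_succ]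
    gcongr
    · calc ∫ y, Var[fun x ↦ f (Fin.cons x y); μ 0] ∂(Measure.pi fun j : Fin n ↦ μ j.succ)
          ≤ ∫ _, (K 0 : ℝ) ^ 2 * Var[id; μ 0] ∂(Measure.pi fun j : Fin n ↦ μ j.succ) :=
            integral_mono_of_nonneg (.of_forall fun _ ↦ variance_nonneg _ _) (integrable_const _)
              (.of_forall fun y ↦ (hf.lipschitzWith_cons y).variance_comp_le (X := id) (hμ 0))
        _ = (K 0 : ℝ) ^ 2 * Var[id; μ 0] := by simp
    · exact ih (hf.integral_cons ((hμ 0).integrable one_le_two)) fun j ↦ hμ j.succ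

end CoordLipschitzWith

lemma cond_univ_pi {ι : Type*} [Fintype ι] {α : ι → Type*} [∀ i, MeasurableSpace (α i)]
    {μ : ∀ i, Measure (α i)} [∀ i, SigmaFinite (μ i)] {s : ∀ i, Set (α i)}
    (hs : ∀ i, MeasurableSet (s i)) (hfin : ∀ i, μ i (s i) ≠ ∞) :
    (Measure.pi μ)[|univ.pi s] = Measure.pi fun i ↦ (μ i)[|s i] := by
  refine (Measure.pi_eq fun t _ ↦ ?_).symm
  simp_rw [cond_apply (MeasurableSet.univ_pi hs), cond_apply (hs _), ← pi_inter_distrib,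
    Measure.pi_pi, Finset.prod_mul_distrib]
  rw [ENNReal.prod_inv_distrib fun i _ j _ _ ↦ .inr (hfin j)]

lemma isProbabilityMeasure_cond_Icc {a b : ℝ} (hab : a < b) :
    IsProbabilityMeasure (volume[|Icc a b]) :=
  cond_isProbabilityMeasure_of_finite (by simp [hab]) (by simp)

lemma memLp_id_cond_Icc (a b : ℝ) (p : ℝ≥0∞) : MemLp id p (volume[|Icc a b]) := by
  refine MemLp.of_bound aestronglyMeasurable_id (max |a| |b|) ?_
  filter_upwards [ae_cond_mem measurableSet_Icc] with x hx
  exact abs_le_max_abs_abs hx.1 hx.2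

lemma variance_id_cond_Icc {a b : ℝ} (hab : a < b) :
    Var[id; volume[|Icc a b]] = (b - a) ^ 2 / 12 := by
  have := isProbabilityMeasure_cond_Icc hab
  have hintegral : ∀ g : ℝ → ℝ, ∫ x, g x ∂volume[|Icc a b] = (b - a)⁻¹ * ∫ x in a..b, g x := by
    intro g
    rw [ProbabilityTheory.cond, integral_smul_measure, intervalIntegral.integral_of_le hab.le,
      ← integral_Icc_eq_integral_Ioc, Real.volume_Icc, ENNReal.toReal_inv,
      ENNReal.toReal_ofReal (sub_nonneg.2 hab.le), smul_eq_mul]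
  rw [variance_eq_sub (memLp_id_cond_Icc a b 2)]
  simp only [Pi.pow_apply, id]
  rw [hintegral, hintegral, integral_pow, integral_id]
  field_simp [sub_ne_zero.2 hab.ne']
  ring

lemma coordLipschitzWith_comp_projIcc {ι : Type*} [DecidableEq ι] {a b : ι → ℝ}
    (hab : ∀ j, a j ≤ b j) {L : ι → ℝ} {g : (ι → ℝ) → ℝ}
    (hg : ∀ j, ∀ x ∈ univ.pi fun i ↦ Icc (a i) (b i), ∀ x' ∈ univ.pi fun i ↦ Icc (a i) (b i),
      (∀ i, i ≠ j → x i = x' i) → |g x - g x'| ≤ L j * |x j - x' j|) :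
    CoordLipschitzWith (fun j ↦ (L j).toNNReal)
      fun x ↦ g fun i ↦ projIcc (a i) (b i) (hab i) (x i) := by
  intro x j
  refine LipschitzWith.of_dist_le_mul fun t s ↦ ?_
  have hmem : ∀ y : ι → ℝ, (fun i ↦ (projIcc (a i) (b i) (hab i) (y i) : ℝ)) ∈
      univ.pi fun i ↦ Icc (a i) (b i) := fun y i _ ↦ Subtype.prop _
  have hstep := hg j _ (hmem (update x j t)) _ (hmem (update x j s)) fun i hi ↦ by
    simp only [update_of_ne hi]
  simp only [update_self] at hstep
  rw [Real.dist_eq, Real.dist_eq]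
  calc _ ≤ L j * |(projIcc (a j) (b j) (hab j) t : ℝ) - projIcc (a j) (b j) (hab j) s| := hstep
    _ ≤ (L j).toNNReal * |(projIcc (a j) (b j) (hab j) t : ℝ) - projIcc (a j) (b j) (hab j) s| :=
      mul_le_mul_of_nonneg_right (Real.le_coe_toNNReal _) (abs_nonneg _)
    _ ≤ (L j).toNNReal * |t - s| :=
      mul_le_mul_of_nonneg_left (abs_projIcc_sub_projIcc (hab j)) (NNReal.coe_nonneg _)

theorem variance_uniform_cell_upper_general (n : ℕ) (c Δ : Fin n → ℝ) (hΔ : ∀ j, 0 < Δ j)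
    (S : Set (Fin n → ℝ)) (hS : S = Set.univ.pi fun j => Set.Icc (c j) (c j + Δ j))
    (b : Fin n → ℝ)
    (g : (Fin n → ℝ) → ℝ)
    (hLip : ∀ j : Fin n, ∀ x ∈ S, ∀ x' ∈ S,
      (∀ i, i ≠ j → x i = x' i) → |g x - g x'| ≤ b j * |x j - x' j|)
    (μ : Measure (Fin n → ℝ)) (hμ : μ = (volume S)⁻¹ • volume.restrict S) :
    variance g μ ≤ ∑ j, b j ^ 2 * Δ j ^ 2 / 12 := by
  subst hS hμ
  have hlt : ∀ j, c j < c j + Δ j := fun j ↦ lt_add_of_pos_right (c j) (hΔ j)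
  have hle : ∀ j, c j ≤ c j + Δ j := fun j ↦ (hlt j).le
  have := fun j ↦ isProbabilityMeasure_cond_Icc (hlt j)
  have hunif : volume[|univ.pi fun j ↦ Icc (c j) (c j + Δ j)] =
      Measure.pi fun j ↦ volume[|Icc (c j) (c j + Δ j)] :=
    cond_univ_pi (fun _ ↦ measurableSet_Icc) fun _ ↦ by simp
  have hclamp : g =ᵐ[volume[|univ.pi fun j ↦ Icc (c j) (c j + Δ j)]]
      fun x ↦ g fun j ↦ projIcc (c j) (c j + Δ j) (hle j) (x j) := by
    filter_upwards [ae_cond_mem (MeasurableSet.univ_pi fun _ ↦ measurableSet_Icc)] with x hx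
    simp only [projIcc_of_mem _ (hx _ (mem_univ _))]
  calc variance g (volume[|univ.pi fun j ↦ Icc (c j) (c j + Δ j)])
      = variance (fun x ↦ g fun j ↦ projIcc (c j) (c j + Δ j) (hle j) (x j))
          (Measure.pi fun j ↦ volume[|Icc (c j) (c j + Δ j)]) := by
        rw [variance_congr hclamp, hunif]
    _ ≤ ∑ j, ((b j).toNNReal : ℝ) ^ 2 * Var[id; volume[|Icc (c j) (c j + Δ j)]] :=
        (coordLipschitzWith_comp_projIcc hle hLip).variance_pi_le fun j ↦ memLp_id_cond_Icc _ _ 2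
    _ ≤ ∑ j, b j ^ 2 * Δ j ^ 2 / 12 := by
        gcongr with j
        rw [variance_id_cond_Icc (hlt j), add_sub_cancel_left,
          mul_div_assoc]
        refine mul_le_mul_of_nonneg_right ?_ (by positivity)
        rw [Real.coe_toNNReal', sq_le_sq, abs_of_nonneg (le_max_right _ _)]
        exact max_le (le_abs_self _) (abs_nonneg _)

/-- Upper bound of Lemma 10: if `g` is continuous on a rectangular cell `S` and is
coordinatewise Lipschitz with constants `b_j`, and `X` is uniformly distributed on `S`,
then `Var(g(X)) ≤ ∑ b_j² Δ_j² / 12`. -/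
theorem variance_uniform_cell_upper (n : ℕ) (c Δ : Fin n → ℝ) (hΔ : ∀ j, 0 < Δ j)
    (S : Set (Fin n → ℝ)) (hS : S = Set.univ.pi fun j => Set.Icc (c j) (c j + Δ j))
    (b : Fin n → ℝ)
    (g : (Fin n → ℝ) → ℝ) (hg : ContinuousOn g S)
    (hLip : ∀ j : Fin n, ∀ x ∈ S, ∀ x' ∈ S,
      (∀ i, i ≠ j → x i = x' i) → |g x - g x'| ≤ b j * |x j - x' j|)
    (μ : Measure (Fin n → ℝ)) (hμ : μ = (volume S)⁻¹ • volume.restrict S) :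
    variance g μ ≤ ∑ j, b j ^ 2 * Δ j ^ 2 / 12 :=
  variance_uniform_cell_upper_general n c Δ hΔ S hS b g hLip μ hμ
end

section
/- Let X be a random variable with density f that is continuous and strictly positive on [0,1], and let w : [0,1] → [0,1] be a continuously differentiable increasing bijection with derivative λ := w' continuous and strictly positive. For K ∈ ℕ, K ≥ 1, let p_i := P(X ∈ w^{−1}(((i−1)/K, i/K])) for i = 1,…,K, and let H_K := −∑_{i=1}^K p_i·log₂ p_i (with the convention 0·log₂ 0 = 0). Then lim_{K→∞} ( H_K − log₂ K ) = h(X) + E[log₂ λ(X)], where h(X) := −∫_0^1 f(x)·log₂ f(x) dx is the differential entropy of X. -/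
/-!
On a cell `[a, b]` of the quantizer, `w(b) - w(a) = 1 / K`, so `K pᵢ = (∫ₐᵇ f) / (∫ₐᵇ λ)`. The
cells have length `O(1 / K)`, so uniform continuity of `log f` and `log λ` makes `log (K pᵢ)`
uniformly close to `log (f x / λ x)` on the cell. Since `∑ pᵢ = 1`,
`H_K - log₂ K = -∑ pᵢ log₂ (K pᵢ)`, which is then uniformly close to `-∫ f log₂ (f / λ)`.
-/

open MeasureTheory Filter Set Real
open scoped Topology

theorem abs_log_sub_log_le_iff {u v ε : ℝ} (hu : 0 < u) (hv : 0 < v) :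
    |log u - log v| ≤ ε ↔ u ∈ Icc (exp (-ε) * v) (exp ε * v) := by
  rw [abs_le, mem_Icc, ← log_le_log_iff (by positivity) hu, ← log_le_log_iff hu (by positivity),
    log_mul (exp_pos _).ne' hv.ne', log_mul (exp_pos _).ne' hv.ne', log_exp, log_exp]
  constructor <;> rintro ⟨h₁, h₂⟩ <;> constructor <;> linarith

theorem abs_log_integral_sub_log_mul_le {g : ℝ → ℝ} {a b x ε : ℝ} (hab : a < b)
    (hg : IntervalIntegrable g volume a b) (hgx : 0 < g x) (hg_pos : ∀ y ∈ Icc a b, 0 < g y)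
    (hclose : ∀ y ∈ Icc a b, |log (g y) - log (g x)| ≤ ε) :
    |log (∫ y in a..b, g y) - log ((b - a) * g x)| ≤ ε := by
  have hbounds : ∀ y ∈ Icc a b, g y ∈ Icc (exp (-ε) * g x) (exp ε * g x) :=
    fun y hy => (abs_log_sub_log_le_iff (hg_pos y hy) hgx).1 (hclose y hy)
  have hlo : exp (-ε) * ((b - a) * g x) ≤ ∫ y in a..b, g y := by
    have := intervalIntegral.integral_mono_on hab.le intervalIntegrable_const hg
      fun y hy => (hbounds y hy).1
    rw [intervalIntegral.integral_const, smul_eq_mul] at this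
    linarith
  have hhi : ∫ y in a..b, g y ≤ exp ε * ((b - a) * g x) := by
    have := intervalIntegral.integral_mono_on hab.le hg intervalIntegrable_const
      fun y hy => (hbounds y hy).2
    rw [intervalIntegral.integral_const, smul_eq_mul] at this
    linarith
  have hba : 0 < (b - a) * g x := mul_pos (sub_pos.2 hab) hgx
  exact (abs_log_sub_log_le_iff (lt_of_lt_of_le (by positivity) hlo) hba).2 ⟨hlo, hhi⟩

theorem exists_pos_forall_abs_log_integral_sub_log_mul_le {g : ℝ → ℝ} {l u ε : ℝ}
    (hg : ContinuousOn g (Icc l u)) (hg_pos : ∀ x ∈ Icc l u, 0 < g x) (hε : 0 < ε) :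
    ∃ δ > 0, ∀ a b, l ≤ a → a < b → b ≤ u → b - a < δ → ∀ x ∈ Icc a b,
      |log (∫ y in a..b, g y) - log ((b - a) * g x)| ≤ ε := by
  have hlog : UniformContinuousOn (fun x => log (g x)) (Icc l u) :=
    isCompact_Icc.uniformContinuousOn_of_continuous (hg.log fun x hx => (hg_pos x hx).ne')
  obtain ⟨δ, hδ, hclose⟩ := Metric.uniformContinuousOn_iff.1 hlog ε hε
  refine ⟨δ, hδ, fun a b hla hab hbu hδab x hx => ?_⟩
  have hsub : Icc a b ⊆ Icc l u := Icc_subset_Icc hla hbu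
  refine abs_log_integral_sub_log_mul_le hab
    (hg.mono (uIcc_of_le hab.le ▸ hsub)).intervalIntegrable (hg_pos x (hsub hx))
    (fun y hy => hg_pos y (hsub hy)) fun y hy => (hclose y (hsub hy) x (hsub hx) ?_).le
  rw [Real.dist_eq, abs_lt]
  constructor <;> linarith [hx.1, hx.2, hy.1, hy.2]

theorem exists_pos_forall_abs_log_integral_div_sub_log_div_le {f g : ℝ → ℝ} {l u ε : ℝ}
    (hf : ContinuousOn f (Icc l u)) (hf_pos : ∀ x ∈ Icc l u, 0 < f x)
    (hg : ContinuousOn g (Icc l u)) (hg_pos : ∀ x ∈ Icc l u, 0 < g x) (hε : 0 < ε) :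
    ∃ δ > 0, ∀ a b, l ≤ a → a < b → b ≤ u → b - a < δ → ∀ x ∈ Icc a b,
      |log ((∫ y in a..b, f y) / ∫ y in a..b, g y) - log (f x / g x)| ≤ ε := by
  obtain ⟨δf, hδf, hf_close⟩ :=
    exists_pos_forall_abs_log_integral_sub_log_mul_le hf hf_pos (half_pos hε)
  obtain ⟨δg, hδg, hg_close⟩ :=
    exists_pos_forall_abs_log_integral_sub_log_mul_le hg hg_pos (half_pos hε)
  refine ⟨min δf δg, lt_min hδf hδg, fun a b hla hab hbu hδab x hx => ?_⟩
  have hxI : x ∈ Icc l u := ⟨hla.trans hx.1, hx.2.trans hbu⟩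
  have hba : 0 < b - a := sub_pos.2 hab
  have hint_pos : ∀ h : ℝ → ℝ, ContinuousOn h (Icc l u) → (∀ x ∈ Icc l u, 0 < h x) →
      0 < ∫ y in a..b, h y := fun h hh hh_pos =>
    intervalIntegral.intervalIntegral_pos_of_pos_on
      ((hh.mono (Icc_subset_Icc hla hbu)).intervalIntegrable_of_Icc hab.le)
      (fun y hy => hh_pos y ⟨hla.trans hy.1.le, hy.2.le.trans hbu⟩) hab
  have hf_close := hf_close a b hla hab hbu (hδab.trans_le (min_le_left _ _)) x hx
  have hg_close := hg_close a b hla hab hbu (hδab.trans_le (min_le_right _ _)) x hx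
  rw [log_mul hba.ne' (hf_pos x hxI).ne'] at hf_close
  rw [log_mul hba.ne' (hg_pos x hxI).ne'] at hg_close
  rw [log_div (hint_pos f hf hf_pos).ne' (hint_pos g hg hg_pos).ne',
    log_div (hf_pos x hxI).ne' (hg_pos x hxI).ne']
  rw [abs_le] at hf_close hg_close ⊢
  constructor <;> linarith [hf_close.1, hf_close.2, hg_close.1, hg_close.2]

theorem abs_integral_mul_sub_integral_mul_le {f G : ℝ → ℝ} {a b c η : ℝ} (hab : a ≤ b)
    (hf : IntervalIntegrable f volume a b)
    (hfG : IntervalIntegrable (fun x => f x * G x) volume a b)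
    (hf_nonneg : ∀ x ∈ Icc a b, 0 ≤ f x) (hclose : ∀ x ∈ Icc a b, |c - G x| ≤ η) :
    |(∫ x in a..b, f x) * c - ∫ x in a..b, f x * G x| ≤ η * ∫ x in a..b, f x := by
  have hdiff : IntervalIntegrable (fun x => f x * (c - G x)) volume a b := by
    simpa only [mul_sub] using (hf.mul_const c).sub hfG
  calc |(∫ x in a..b, f x) * c - ∫ x in a..b, f x * G x|
      = |∫ x in a..b, f x * (c - G x)| := by
        simp only [mul_sub]
        rw [intervalIntegral.integral_sub (hf.mul_const c) hfG,
          intervalIntegral.integral_mul_const]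
    _ ≤ ∫ x in a..b, |f x * (c - G x)| := intervalIntegral.abs_integral_le_integral_abs hab
    _ ≤ ∫ x in a..b, η * f x := by
        refine intervalIntegral.integral_mono_on hab hdiff.abs (hf.const_mul η) fun x hx => ?_
        rw [abs_mul, abs_of_nonneg (hf_nonneg x hx), mul_comm]
        exact mul_le_mul_of_nonneg_right (hclose x hx) (hf_nonneg x hx)
    _ = η * ∫ x in a..b, f x := intervalIntegral.integral_const_mul η _

theorem lt_and_sub_le_of_integral_eq {g : ℝ → ℝ} {l u a b m c : ℝ}
    (hg : ContinuousOn g (Icc l u)) (hm : 0 < m) (hm_le : ∀ x ∈ Icc l u, m ≤ g x)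
    (ha : a ∈ Icc l u) (hb : b ∈ Icc l u) (hc : 0 < c) (h : ∫ x in a..b, g x = c) :
    a < b ∧ b - a ≤ c / m := by
  have hab : a < b := by
    by_contra! hba
    have hneg : ∫ x in a..b, g x ≤ 0 := by
      rw [intervalIntegral.integral_symm, neg_nonpos]
      exact intervalIntegral.integral_nonneg hba fun x hx =>
        hm.le.trans (hm_le x ⟨hb.1.trans hx.1, hx.2.trans ha.2⟩)
    linarith
  refine ⟨hab, (le_div_iff₀ hm).2 ?_⟩
  have := intervalIntegral.integral_mono_on (μ := volume) hab.le intervalIntegrable_const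
    (hg.mono (uIcc_subset_Icc ha hb)).intervalIntegrable
    fun x hx => hm_le x ⟨ha.1.trans hx.1, hx.2.trans hb.2⟩
  rwa [intervalIntegral.integral_const, smul_eq_mul, h] at this

theorem tendsto_nhds_of_forall_eventually_abs_sub_le_mul {α : Type*} {l : Filter α}
    {u : α → ℝ} {c C : ℝ} (h : ∀ η > 0, ∀ᶠ x in l, |u x - c| ≤ η * C) :
    Tendsto u l (𝓝 c) := by
  refine Metric.tendsto_nhds.2 fun ε hε => ?_
  filter_upwards [h (ε / (|C| + 1)) (by positivity)] with x hx
  rw [Real.dist_eq]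
  calc |u x - c| ≤ ε / (|C| + 1) * |C| :=
        hx.trans (mul_le_mul_of_nonneg_left (le_abs_self C) (by positivity))
    _ < ε := by
        rw [div_mul_eq_mul_div, div_lt_iff₀ (by positivity)]
        nlinarith [abs_nonneg C]

theorem tendsto_sum_integral_mul_log_of_equal_mass {f lam : ℝ → ℝ} {l u : ℝ}
    (hf : ContinuousOn f (Icc l u)) (hf_pos : ∀ x ∈ Icc l u, 0 < f x)
    (hlam : ContinuousOn lam (Icc l u)) (hlam_pos : ∀ x ∈ Icc l u, 0 < lam x)
    (a : ℕ → ℕ → ℝ) (ha : ∀ K j, j ≤ K → a K j ∈ Icc l u) (ha0 : ∀ K, a K 0 = l)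
    (haK : ∀ K, 0 < K → a K K = u)
    (hmass : ∀ K j, j < K → ∫ x in a K j..a K (j + 1), lam x = 1 / K) :
    Tendsto (fun K : ℕ => ∑ j ∈ Finset.range K,
        (∫ x in a K j..a K (j + 1), f x) * log (K * ∫ x in a K j..a K (j + 1), f x))
      atTop (𝓝 (∫ x in l..u, f x * log (f x / lam x))) := by
  have hint : ∀ {h : ℝ → ℝ}, ContinuousOn h (Icc l u) → ∀ K j, j < K →
      IntervalIntegrable h volume (a K j) (a K (j + 1)) := fun hh K j hj =>
    (hh.mono (uIcc_subset_Icc (ha K j hj.le) (ha K (j + 1) hj))).intervalIntegrable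
  have hF : ContinuousOn (fun x => f x * log (f x / lam x)) (Icc l u) :=
    hf.mul ((hf.div hlam fun x hx => (hlam_pos x hx).ne').log
      fun x hx => (div_pos (hf_pos x hx) (hlam_pos x hx)).ne')
  obtain ⟨m, hm, hm_le⟩ := isCompact_Icc.exists_forall_le' hlam hlam_pos
  refine tendsto_nhds_of_forall_eventually_abs_sub_le_mul (C := ∫ x in l..u, f x) fun η hη => ?_
  obtain ⟨δ, hδ, hclose⟩ :=
    exists_pos_forall_abs_log_integral_div_sub_log_div_le hf hf_pos hlam hlam_pos hη
  have hmesh : ∀ᶠ K : ℕ in atTop, 1 / (K : ℝ) / m < δ :=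
    (tendsto_one_div_atTop_nhds_zero_nat.div_const m).eventually_lt_const (by rwa [zero_div])
  filter_upwards [eventually_gt_atTop 0, hmesh] with K hK hKδ
  have hcell : ∀ j ∈ Finset.range K,
      |(∫ x in a K j..a K (j + 1), f x) * log (K * ∫ x in a K j..a K (j + 1), f x)
        - ∫ x in a K j..a K (j + 1), f x * log (f x / lam x)|
        ≤ η * ∫ x in a K j..a K (j + 1), f x := by
    intro j hj
    rw [Finset.mem_range] at hj
    obtain ⟨hab, hwidth⟩ := lt_and_sub_le_of_integral_eq hlam hm hm_le (ha K j hj.le)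
      (ha K (j + 1) hj) (by positivity) (hmass K j hj)
    -- each cell has `λ`-mass `1 / K`, so `K pⱼ = pⱼ / ∫ λ`
    rw [show (K : ℝ) * ∫ x in a K j..a K (j + 1), f x
        = (∫ x in a K j..a K (j + 1), f x) / ∫ x in a K j..a K (j + 1), lam x by
      rw [hmass K j hj, div_div_eq_mul_div, div_one, mul_comm]]
    exact abs_integral_mul_sub_integral_mul_le hab.le (hint hf K j hj) (hint hF K j hj)
      (fun x hx => (hf_pos x ⟨(ha K j hj.le).1.trans hx.1, hx.2.trans (ha K (j + 1) hj).2⟩).le)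
      (hclose _ _ (ha K j hj.le).1 hab (ha K (j + 1) hj).2 (hwidth.trans_lt hKδ))
  calc _ = |∑ j ∈ Finset.range K,
        ((∫ x in a K j..a K (j + 1), f x) * log (K * ∫ x in a K j..a K (j + 1), f x)
          - ∫ x in a K j..a K (j + 1), f x * log (f x / lam x))| := by
        rw [Finset.sum_sub_distrib,
          intervalIntegral.sum_integral_adjacent_intervals (hint hF K), ha0, haK K hK]
    _ ≤ ∑ j ∈ Finset.range K, η * ∫ x in a K j..a K (j + 1), f x :=
        (Finset.abs_sum_le_sum_abs _ _).trans (Finset.sum_le_sum hcell)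
    _ = η * ∫ x in l..u, f x := by
        rw [← Finset.mul_sum, intervalIntegral.sum_integral_adjacent_intervals (hint hf K), ha0,
          haK K hK]

theorem StrictMonoOn.sep_Icc_mem_Ioc {w : ℝ → ℝ} {l u a b : ℝ} (hw : StrictMonoOn w (Icc l u))
    (ha : a ∈ Icc l u) (hb : b ∈ Icc l u) :
    {x ∈ Icc l u | w x ∈ Ioc (w a) (w b)} = Ioc a b := by
  ext x
  simp only [mem_sep_iff, mem_Ioc]
  constructor
  · rintro ⟨hx, hax, hxb⟩
    exact ⟨(hw.lt_iff_lt ha hx).1 hax, (hw.le_iff_le hx hb).1 hxb⟩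
  · rintro ⟨hax, hxb⟩
    have hx : x ∈ Icc l u := ⟨ha.1.trans hax.le, hxb.trans hb.2⟩
    exact ⟨hx, (hw.lt_iff_lt ha hx).2 hax, (hw.le_iff_le hx hb).2 hxb⟩

theorem integral_eq_sub_of_hasDerivWithinAt_Icc {w lam : ℝ → ℝ} {l u a b : ℝ}
    (hw : ∀ x ∈ Icc l u, HasDerivWithinAt w (lam x) (Icc l u) x)
    (hlam : ContinuousOn lam (Icc l u)) (ha : a ∈ Icc l u) (hb : b ∈ Icc l u) :
    ∫ x in a..b, lam x = w b - w a := by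
  wlog hab : a ≤ b generalizing a b
  · rw [intervalIntegral.integral_symm, this hb ha (le_of_not_ge hab), neg_sub]
  have hsub : Icc a b ⊆ Icc l u := Icc_subset_Icc ha.1 hb.2
  refine intervalIntegral.integral_eq_sub_of_hasDerivAt_of_le hab
    (fun x hx => (hw x (hsub hx)).continuousWithinAt.mono hsub) (fun x hx => ?_)
    (hlam.mono (uIcc_subset_Icc ha hb)).intervalIntegrable
  exact (hw x (hsub (Ioo_subset_Icc_self hx))).hasDerivAt
    (Icc_mem_nhds (ha.1.trans_lt hx.1) (hx.2.trans_le hb.2))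

theorem ContinuousOn.invFunOn_Icc_mem_and_apply {w : ℝ → ℝ} {l u y : ℝ} (hlu : l ≤ u)
    (hw : ContinuousOn w (Icc l u)) (hy : y ∈ Icc (w l) (w u)) :
    Function.invFunOn w (Icc l u) y ∈ Icc l u ∧ w (Function.invFunOn w (Icc l u) y) = y :=
  have hy' := intermediate_value_Icc hlu hw hy
  ⟨Function.invFunOn_mem hy', Function.invFunOn_eq hy'⟩

structure IsCompander (w lam : ℝ → ℝ) : Prop where
  map_zero : w 0 = 0
  map_one : w 1 = 1
  hasDerivWithinAt : ∀ x ∈ Icc (0 : ℝ) 1, HasDerivWithinAt w (lam x) (Icc 0 1) x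
  continuousOn_density : ContinuousOn lam (Icc 0 1)
  density_pos : ∀ x ∈ Icc (0 : ℝ) 1, 0 < lam x

noncomputable def companderThreshold (w : ℝ → ℝ) (K j : ℕ) : ℝ :=
  Function.invFunOn w (Icc 0 1) (j / K)

namespace IsCompander

variable {w lam : ℝ → ℝ} {K j : ℕ}

theorem continuousOn (hw : IsCompander w lam) : ContinuousOn w (Icc 0 1) :=
  fun x hx => (hw.hasDerivWithinAt x hx).continuousWithinAt

theorem strictMonoOn (hw : IsCompander w lam) : StrictMonoOn w (Icc 0 1) :=
  strictMonoOn_of_hasDerivWithinAt_pos (convex_Icc 0 1) hw.continuousOn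
    (fun x hx => (hw.hasDerivWithinAt x (interior_subset hx)).mono interior_subset)
    fun x hx => hw.density_pos x (interior_subset hx)

theorem threshold_mem_and_apply (hw : IsCompander w lam) (hj : j ≤ K) :
    companderThreshold w K j ∈ Icc 0 1 ∧ w (companderThreshold w K j) = j / K := by
  refine hw.continuousOn.invFunOn_Icc_mem_and_apply zero_le_one ?_
  rw [hw.map_zero, hw.map_one]
  exact ⟨by positivity, div_le_one_of_le₀ (by exact_mod_cast hj) K.cast_nonneg⟩

theorem threshold_mem (hw : IsCompander w lam) (hj : j ≤ K) : companderThreshold w K j ∈ Icc 0 1 :=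
  (hw.threshold_mem_and_apply hj).1

theorem threshold_lt_succ (hw : IsCompander w lam) (hj : j < K) :
    companderThreshold w K j < companderThreshold w K (j + 1) := by
  obtain ⟨hmem, happ⟩ := hw.threshold_mem_and_apply hj.le
  obtain ⟨hmem', happ'⟩ := hw.threshold_mem_and_apply hj
  rw [← hw.strictMonoOn.lt_iff_lt hmem hmem', happ, happ']
  exact div_lt_div_of_pos_right (by push_cast; linarith) (Nat.cast_pos.2 (Nat.zero_lt_of_lt hj))

theorem threshold_zero (hw : IsCompander w lam) : companderThreshold w K 0 = 0 := by
  obtain ⟨hmem, happ⟩ := hw.threshold_mem_and_apply K.zero_le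
  refine hw.strictMonoOn.injOn hmem (left_mem_Icc.2 zero_le_one) ?_
  rw [happ, hw.map_zero, Nat.cast_zero, zero_div]

theorem threshold_self (hw : IsCompander w lam) (hK : 0 < K) : companderThreshold w K K = 1 := by
  obtain ⟨hmem, happ⟩ := hw.threshold_mem_and_apply le_rfl
  refine hw.strictMonoOn.injOn hmem (right_mem_Icc.2 zero_le_one) ?_
  rw [happ, hw.map_one, div_self (Nat.cast_ne_zero.2 hK.ne')]

theorem integral_density_threshold (hw : IsCompander w lam) (hj : j < K) :
    ∫ x in companderThreshold w K j..companderThreshold w K (j + 1), lam x = 1 / K := by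
  obtain ⟨hmem, happ⟩ := hw.threshold_mem_and_apply hj.le
  obtain ⟨hmem', happ'⟩ := hw.threshold_mem_and_apply hj
  rw [integral_eq_sub_of_hasDerivWithinAt_Icc hw.hasDerivWithinAt hw.continuousOn_density hmem
    hmem', happ, happ']
  push_cast
  ring

theorem cell_eq_Ioc_threshold (hw : IsCompander w lam) (hj : j < K) :
    {x ∈ Icc (0 : ℝ) 1 | w x ∈ Ioc ((((j + 1 : ℕ) : ℝ) - 1) / K) (((j + 1 : ℕ) : ℝ) / K)}
      = Ioc (companderThreshold w K j) (companderThreshold w K (j + 1)) := by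
  obtain ⟨hmem, happ⟩ := hw.threshold_mem_and_apply hj.le
  obtain ⟨hmem', happ'⟩ := hw.threshold_mem_and_apply hj
  rw [← hw.strictMonoOn.sep_Icc_mem_Ioc hmem hmem', happ, happ', Nat.cast_succ,
    add_sub_cancel_right]

end IsCompander

theorem measure_preimage_toReal_eq_setIntegral {Ω : Type*} [MeasurableSpace Ω] {μ : Measure Ω}
    {X : Ω → ℝ} (hX : Measurable X) {f : ℝ → ℝ}
    (hf : Measure.map X μ = volume.withDensity fun x => ENNReal.ofReal (f x))
    {s : Set ℝ} (hs : MeasurableSet s) (hfs : IntegrableOn f s) (hf_nonneg : ∀ x ∈ s, 0 ≤ f x) :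
    (μ (X ⁻¹' s)).toReal = ∫ x in s, f x := by
  rw [← Measure.map_apply hX hs, hf, withDensity_apply _ hs,
    ← ofReal_integral_eq_lintegral_ofReal hfs ((ae_restrict_iff' hs).2 (ae_of_all _ hf_nonneg)),
    ENNReal.toReal_ofReal (setIntegral_nonneg hs hf_nonneg)]

theorem intervalIntegral_eq_one_of_map_eq_withDensity {Ω : Type*} [MeasurableSpace Ω]
    {μ : Measure Ω} [IsProbabilityMeasure μ] {X : Ω → ℝ} (hX : Measurable X) {f : ℝ → ℝ}
    (hf : Measure.map X μ = volume.withDensity fun x => ENNReal.ofReal (f x)) {l u : ℝ}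
    (hlu : l ≤ u) (hf_supp : ∀ x ∉ Icc l u, f x = 0) (hf_int : IntegrableOn f (Icc l u))
    (hf_nonneg : ∀ x ∈ Icc l u, 0 ≤ f x) :
    ∫ x in l..u, f x = 1 := by
  have hcompl : μ (X ⁻¹' Icc l u)ᶜ = 0 := by
    rw [← preimage_compl, ← Measure.map_apply hX measurableSet_Icc.compl, hf,
      withDensity_apply _ measurableSet_Icc.compl,
      setLIntegral_congr_fun measurableSet_Icc.compl fun x hx => by rw [hf_supp x hx]]
    simp
  rw [intervalIntegral.integral_of_le hlu, ← integral_Icc_eq_integral_Ioc,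
    ← measure_preimage_toReal_eq_setIntegral hX hf measurableSet_Icc hf_int hf_nonneg,
    (prob_compl_eq_zero_iff (hX measurableSet_Icc)).1 hcompl, ENNReal.toReal_one]

theorem Finset.sum_Icc_one_eq_sum_range_succ {M : Type*} [AddCommMonoid M] (g : ℕ → M) (K : ℕ) :
    ∑ i ∈ Finset.Icc 1 K, g i = ∑ j ∈ Finset.range K, g (j + 1) := by
  rw [Finset.range_eq_Ico, Finset.sum_Ico_add', zero_add, Finset.Ico_add_one_right_eq_Icc]

theorem neg_sum_mul_logb_sub_logb {ι : Type*} (s : Finset ι) {p : ι → ℝ}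
    (hp : ∑ i ∈ s, p i = 1) {K : ℝ} (hK : K ≠ 0) :
    -∑ i ∈ s, p i * logb 2 (p i) - logb 2 K = -(∑ i ∈ s, p i * log (K * p i)) / log 2 := by
  have hsplit : ∀ i, p i * log (K * p i) = p i * log K + p i * log (p i) := by
    intro i
    rcases eq_or_ne (p i) 0 with h | h
    · simp [h]
    · rw [log_mul hK h, mul_add]
  simp only [hsplit, Finset.sum_add_distrib, ← Finset.sum_mul, hp, logb, mul_div_assoc',
    ← Finset.sum_div]
  ring

theorem neg_integral_mul_logb_add_integral_mul_logb {f lam : ℝ → ℝ} {l u : ℝ} (hlu : l ≤ u)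
    (hf : ContinuousOn f (Icc l u)) (hf_pos : ∀ x ∈ Icc l u, 0 < f x)
    (hlam : ContinuousOn lam (Icc l u)) (hlam_pos : ∀ x ∈ Icc l u, 0 < lam x) :
    (-∫ x in Icc l u, f x * logb 2 (f x)) + ∫ x in Icc l u, f x * logb 2 (lam x)
      = -(∫ x in l..u, f x * log (f x / lam x)) / log 2 := by
  have hint : ∀ {g : ℝ → ℝ}, ContinuousOn g (Icc l u) → (∀ x ∈ Icc l u, 0 < g x) →
      IntegrableOn (fun x => f x * log (g x)) (Icc l u) := fun hg hg_pos =>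
    (hf.mul (hg.log fun x hx => (hg_pos x hx).ne')).integrableOn_Icc
  have hsplit : ∫ x in l..u, f x * log (f x / lam x)
      = (∫ x in Icc l u, f x * log (f x)) - ∫ x in Icc l u, f x * log (lam x) := by
    rw [intervalIntegral.integral_of_le hlu, ← integral_Icc_eq_integral_Ioc,
      ← integral_sub (hint hf hf_pos) (hint hlam hlam_pos)]
    refine setIntegral_congr_fun measurableSet_Icc fun x hx => ?_
    rw [log_div (hf_pos x hx).ne' (hlam_pos x hx).ne', mul_sub]
  simp only [hsplit, logb, mul_div_assoc', integral_div]
  ring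

/-- Lemma 1: entropy of the output of a companding quantizer.  If `X` has density `f`,
continuous and strictly positive on `[0,1]`, and `w` is a compander with continuous
strictly positive point density `lam = w'`, then the output entropy
`H_K = −∑ p_i log₂ p_i` of the resolution-`K` quantizer satisfies
`H_K − log₂ K → h(X) + E[log₂ λ(X)]`. -/
theorem compander_output_entropy_asymptotics
    {Ω : Type*} [MeasurableSpace Ω] (μ : Measure Ω) [IsProbabilityMeasure μ]
    (X : Ω → ℝ) (hX : Measurable X)
    (f : ℝ → ℝ)
    (hf_density : Measure.map X μ = volume.withDensity fun x => ENNReal.ofReal (f x))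
    (hf_supp : ∀ x ∉ Icc (0 : ℝ) 1, f x = 0)
    (hf_cont : ContinuousOn f (Icc 0 1))
    (hf_pos : ∀ x ∈ Icc (0 : ℝ) 1, 0 < f x)
    (w lam : ℝ → ℝ) (hw0 : w 0 = 0) (hw1 : w 1 = 1)
    (hw_deriv : ∀ x ∈ Icc (0 : ℝ) 1, HasDerivWithinAt w (lam x) (Icc 0 1) x)
    (hlam_cont : ContinuousOn lam (Icc 0 1))
    (hlam_pos : ∀ x ∈ Icc (0 : ℝ) 1, 0 < lam x)
    (p : ℕ → ℕ → ℝ)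
    (hp : ∀ K i, p K i =
      (μ (X ⁻¹' {x ∈ Icc (0 : ℝ) 1 | w x ∈ Ioc (((i : ℝ) - 1) / K) ((i : ℝ) / K)})).toReal)
    (H : ℕ → ℝ)
    (hH : ∀ K, H K = -∑ i ∈ Finset.Icc 1 K, p K i * Real.logb 2 (p K i)) :
    Tendsto (fun K : ℕ => H K - Real.logb 2 K) atTop
      (𝓝 ((-∫ x in Icc (0 : ℝ) 1, f x * Real.logb 2 (f x)) +
          ∫ x in Icc (0 : ℝ) 1, f x * Real.logb 2 (lam x))) := by
  have hw : IsCompander w lam := ⟨hw0, hw1, hw_deriv, hlam_cont, hlam_pos⟩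
  set a := companderThreshold w
  have hp_cell : ∀ K j, j < K → p K (j + 1) = ∫ x in a K j..a K (j + 1), f x := by
    intro K j hj
    have hsub : Ioc (a K j) (a K (j + 1)) ⊆ Icc 0 1 :=
      Ioc_subset_Icc_self.trans (Icc_subset_Icc (hw.threshold_mem hj.le).1 (hw.threshold_mem hj).2)
    rw [hp, hw.cell_eq_Ioc_threshold hj, measure_preimage_toReal_eq_setIntegral hX hf_density
      measurableSet_Ioc (hf_cont.integrableOn_Icc.mono_set hsub)
      fun x hx => (hf_pos x (hsub hx)).le,
      intervalIntegral.integral_of_le (hw.threshold_lt_succ hj).le]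
  have hsum : ∀ K, 0 < K → ∑ i ∈ Finset.Icc 1 K, p K i = 1 := by
    intro K hK
    rw [Finset.sum_Icc_one_eq_sum_range_succ,
      Finset.sum_congr rfl fun j hj => hp_cell K j (Finset.mem_range.1 hj),
      intervalIntegral.sum_integral_adjacent_intervals fun j hj =>
        (hf_cont.mono (uIcc_subset_Icc (hw.threshold_mem hj.le)
          (hw.threshold_mem hj))).intervalIntegrable,
      hw.threshold_zero, hw.threshold_self hK,
      intervalIntegral_eq_one_of_map_eq_withDensity hX hf_density zero_le_one hf_supp
        hf_cont.integrableOn_Icc fun x hx => (hf_pos x hx).le]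
  rw [neg_integral_mul_logb_add_integral_mul_logb zero_le_one hf_cont hf_pos hlam_cont hlam_pos]
  refine Tendsto.congr' ?_ ((tendsto_sum_integral_mul_log_of_equal_mass hf_cont hf_pos hlam_cont
    hlam_pos a (fun K j => hw.threshold_mem) (fun K => hw.threshold_zero)
    (fun K => hw.threshold_self) fun K j => hw.integral_density_threshold).neg.div_const _)
  filter_upwards [eventually_gt_atTop 0] with K hK
  rw [hH, neg_sum_mul_logb_sub_logb _ (hsum K hK) (Nat.cast_ne_zero.2 hK.ne'),
    Finset.sum_Icc_one_eq_sum_range_succ,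
    Finset.sum_congr rfl fun j hj => by rw [← hp_cell K j (Finset.mem_range.1 hj)]]
end

section
/- Let X = (X₁,…,Xₙ) be a random vector with joint density f that is continuous and strictly positive on [0,1]ⁿ. For each j let w_j : [0,1] → [0,1] be a continuously differentiable increasing bijection with derivative λ_j := w_j' continuous and strictly positive, let α₁,…,αₙ > 0 with ∑_j α_j = 1, and for K ∈ ℕ set K_j := ⌊K^{α_j}⌋. Let H_K denote the Shannon entropy (in bits) of the random cell-index vector, i.e., H_K := −∑ P(X ∈ S)·log₂ P(X ∈ S), the sum running over the product cells S = ∏_{j=1}^n w_j^{−1}(((i_j−1)/K_j, i_j/K_j]). Then lim_{K→∞} ( H_K − ∑_{j=1}^n log₂ K_j ) = h(X₁,…,Xₙ) + ∑_{j=1}^n E[log₂ λ_j(X_j)], where h(X₁,…,Xₙ) := −∫_{[0,1]ⁿ} f(x)·log₂ f(x) dx is the joint differential entropy. -/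
/-!
By the mean value theorem every quantizer cell is, up to boundary points, a box with sides
`1 / (K_j λ_j(ζ_j))` for some `ζ` in its closure. Since `log f` and `log λ_j` are uniformly
continuous, on a fine enough cell `S` with probability `p_S` one has, uniformly in `x ∈ S`,
`log p_S + ∑ log K_j ≈ log f(x) - ∑ log λ_j(x_j)`. As the `p_S` sum to one,
`H_K - ∑ log K_j = -∑ p_S (log p_S + ∑ log K_j)`, and averaging the previous estimate against `f`
shows that this tends to `-∫ f (log f - ∑ log λ_j)`.
-/

open MeasureTheory ProbabilityTheory Filter Set
open scoped BigOperators Topology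

namespace Compander

variable {w lam : ℝ → ℝ}

theorem strictMonoOn (hw : ∀ x ∈ Icc (0 : ℝ) 1, HasDerivWithinAt w (lam x) (Icc 0 1) x)
    (hlam : ∀ x ∈ Icc (0 : ℝ) 1, 0 < lam x) : StrictMonoOn w (Icc 0 1) := by
  refine strictMonoOn_of_deriv_pos (convex_Icc 0 1)
    (fun x hx => (hw x hx).continuousWithinAt) fun x hx => ?_
  rw [interior_Icc] at hx
  rw [((hw x (Ioo_subset_Icc_self hx)).hasDerivAt (Icc_mem_nhds hx.1 hx.2)).deriv]
  exact hlam x (Ioo_subset_Icc_self hx)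

theorem mapsTo (hw0 : w 0 = 0) (hw1 : w 1 = 1) (hmono : MonotoneOn w (Icc 0 1)) :
    MapsTo w (Icc 0 1) (Icc 0 1) := fun _ ht =>
  ⟨hw0 ▸ hmono (left_mem_Icc.2 zero_le_one) ht ht.1,
    hw1 ▸ hmono ht (right_mem_Icc.2 zero_le_one) ht.2⟩

theorem exists_interval_preimage (hw0 : w 0 = 0) (hw1 : w 1 = 1)
    (hw : ∀ x ∈ Icc (0 : ℝ) 1, HasDerivWithinAt w (lam x) (Icc 0 1) x)
    (hlam : ∀ x ∈ Icc (0 : ℝ) 1, 0 < lam x) {y₁ y₂ : ℝ} (h₀ : 0 ≤ y₁) (h₁₂ : y₁ < y₂)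
    (h₂ : y₂ ≤ 1) {J : Set ℝ} (hJl : Ioc y₁ y₂ ⊆ J) (hJu : J ⊆ Icc y₁ y₂) :
    ∃ a b ζ, Icc a b ⊆ Icc 0 1 ∧ Ioc a b ⊆ {t ∈ Icc 0 1 | w t ∈ J} ∧
      {t ∈ Icc 0 1 | w t ∈ J} ⊆ Icc a b ∧ ζ ∈ Icc a b ∧ b - a = (y₂ - y₁) / lam ζ := by
  have hcont : ContinuousOn w (Icc 0 1) := fun x hx => (hw x hx).continuousWithinAt
  have hmono := strictMonoOn hw hlam
  have hsurj : Icc (w 0) (w 1) ⊆ w '' Icc 0 1 := intermediate_value_Icc zero_le_one hcont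
  rw [hw0, hw1] at hsurj
  obtain ⟨a, ha, rfl⟩ := hsurj ⟨h₀, h₁₂.le.trans h₂⟩
  obtain ⟨b, hb, rfl⟩ := hsurj ⟨h₀.trans h₁₂.le, h₂⟩
  have hab : a < b := (hmono.lt_iff_lt ha hb).1 h₁₂
  have hsub : Icc a b ⊆ Icc 0 1 := Icc_subset_Icc ha.1 hb.2
  obtain ⟨ζ, hζ, hslope⟩ := exists_hasDerivAt_eq_slope w lam hab (hcont.mono hsub)
    fun x hx => (hw x (hsub (Ioo_subset_Icc_self hx))).hasDerivAt
      (Icc_mem_nhds (ha.1.trans_lt hx.1) (hx.2.trans_le hb.2))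
  refine ⟨a, b, ζ, hsub, fun t ht => ?_, fun t ⟨ht, htJ⟩ => ?_, Ioo_subset_Icc_self hζ, ?_⟩
  · have ht01 := hsub (Ioc_subset_Icc_self ht)
    exact ⟨ht01, hJl ⟨hmono ha ht01 ht.1, hmono.monotoneOn ht01 hb ht.2⟩⟩
  · exact ⟨(hmono.le_iff_le ha ht).1 (hJu htJ).1, (hmono.le_iff_le ht hb).1 (hJu htJ).2⟩
  · rw [hslope, div_div_cancel₀ (sub_pos.2 h₁₂).ne']

end Compander

section SetIntegral

variable {α : Type*} [MeasurableSpace α] {μ : Measure α} {f g : α → ℝ} {η : ℝ}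

theorem abs_setIntegral_mul_sub_setIntegral_le {S : Set α} {c : ℝ} (hS : MeasurableSet S)
    (hf0 : ∀ x ∈ S, 0 ≤ f x) (hf : IntegrableOn f S μ)
    (hfg : IntegrableOn (fun x => f x * g x) S μ) (hc : ∀ x ∈ S, |g x - c| ≤ η) :
    |(∫ x in S, f x ∂μ) * c - ∫ x in S, f x * g x ∂μ| ≤ η * ∫ x in S, f x ∂μ := by
  have hfc : IntegrableOn (fun x => f x * c) S μ := hf.mul_const c
  rw [← integral_mul_const c f, ← integral_sub hfc hfg, ← integral_const_mul η f,
    ← Real.norm_eq_abs]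
  refine norm_integral_le_of_norm_le (hf.const_mul η) ((ae_restrict_iff' hS).2
    (Eventually.of_forall fun x hx => ?_))
  rw [Real.norm_eq_abs, ← mul_sub, abs_mul, abs_of_nonneg (hf0 x hx), abs_sub_comm, mul_comm]
  exact mul_le_mul_of_nonneg_right (hc x hx) (hf0 x hx)

theorem abs_sum_setIntegral_mul_sub_setIntegral_biUnion_le {ι : Type*} (I : Finset ι)
    {S : ι → Set α} {c : ι → ℝ} (hS : ∀ i ∈ I, MeasurableSet (S i))
    (hdisj : (I : Set ι).PairwiseDisjoint S) (hf0 : ∀ i ∈ I, ∀ x ∈ S i, 0 ≤ f x)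
    (hf : IntegrableOn f (⋃ i ∈ I, S i) μ)
    (hfg : IntegrableOn (fun x => f x * g x) (⋃ i ∈ I, S i) μ)
    (hc : ∀ i ∈ I, ∀ x ∈ S i, |g x - c i| ≤ η) :
    |∑ i ∈ I, (∫ x in S i, f x ∂μ) * c i - ∫ x in ⋃ i ∈ I, S i, f x * g x ∂μ| ≤
      η * ∫ x in ⋃ i ∈ I, S i, f x ∂μ := by
  have hsub : ∀ i ∈ I, S i ⊆ ⋃ i ∈ I, S i := fun i hi => subset_biUnion_of_mem hi
  rw [integral_biUnion_finset I hS hdisj fun i hi => hf.mono_set (hsub i hi),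
    integral_biUnion_finset I hS hdisj fun i hi => hfg.mono_set (hsub i hi),
    ← Finset.sum_sub_distrib, Finset.mul_sum]
  exact (Finset.abs_sum_le_sum_abs _ _).trans <| Finset.sum_le_sum fun i hi =>
    abs_setIntegral_mul_sub_setIntegral_le (hS i hi) (hf0 i hi) (hf.mono_set (hsub i hi))
      (hfg.mono_set (hsub i hi)) (hc i hi)

theorem abs_logb_setIntegral_sub_logb_measureReal_sub_le {b : ℝ} (hb : 1 < b) {S : Set α}
    (hS : MeasurableSet S) (hμS : 0 < μ.real S) (hf : IntegrableOn f S μ)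
    (hpos : ∀ y ∈ S, 0 < f y) {u : ℝ} (hosc : ∀ y ∈ S, |Real.logb b (f y) - u| ≤ η) :
    |Real.logb b (∫ y in S, f y ∂μ) - Real.logb b (μ.real S) - u| ≤ η := by
  have hS_fin : μ S ≠ ⊤ := fun h => hμS.ne' (by simp [measureReal_def, h])
  have hlo : b ^ (u - η) * μ.real S ≤ ∫ y in S, f y ∂μ :=
    setIntegral_ge_of_const_le_real hS hS_fin (fun y hy => (Real.le_logb_iff_rpow_le hb
      (hpos y hy)).1 (by linarith [(abs_le.1 (hosc y hy)).1])) hf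
  have hhi : ∫ y in S, f y ∂μ ≤ b ^ (u + η) * μ.real S := by
    calc ∫ y in S, f y ∂μ ≤ ∫ _ in S, b ^ (u + η) ∂μ :=
          setIntegral_mono_on hf (integrableOn_const hS_fin) hS fun y hy =>
            (Real.logb_le_iff_le_rpow hb (hpos y hy)).1 (by linarith [(abs_le.1 (hosc y hy)).2])
      _ = b ^ (u + η) * μ.real S := by rw [setIntegral_const, smul_eq_mul, mul_comm]
  have hb0 : 0 < b := zero_lt_one.trans hb
  have hlog : ∀ v, Real.logb b (b ^ v * μ.real S) = v + Real.logb b (μ.real S) := fun v => by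
    rw [Real.logb_mul (Real.rpow_pos_of_pos hb0 v).ne' hμS.ne', Real.logb_rpow hb0 hb.ne']
  have h₁ := Real.logb_le_logb_of_le hb (by positivity) hlo
  have h₂ := Real.logb_le_logb_of_le hb ((by positivity : (0 : ℝ) < _).trans_le hlo) hhi
  rw [hlog] at h₁ h₂
  exact abs_le.2 ⟨by linarith, by linarith⟩

theorem integral_mul_sub_sum {ι : Type*} {s : Set α} {h : ι → α → ℝ} (J : Finset ι)
    (hg : IntegrableOn (fun x => f x * g x) s μ)
    (hh : ∀ j ∈ J, IntegrableOn (fun x => f x * h j x) s μ) :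
    ∫ x in s, f x * (g x - ∑ j ∈ J, h j x) ∂μ =
      ∫ x in s, f x * g x ∂μ - ∑ j ∈ J, ∫ x in s, f x * h j x ∂μ := by
  simp_rw [mul_sub, Finset.mul_sum]
  rw [integral_sub hg (integrable_finsetSum J hh), integral_finsetSum J hh]

end SetIntegral

def unitCell (N m : ℕ) : Set ℝ :=
  {y | y ∈ Ioc (((m : ℝ) - 1) / N) ((m : ℝ) / N) ∨ (m = 1 ∧ y = 0)}

theorem Ioc_subset_unitCell (N m : ℕ) : Ioc (((m : ℝ) - 1) / N) ((m : ℝ) / N) ⊆ unitCell N m :=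
  fun _ => Or.inl

theorem unitCell_subset_Icc (N m : ℕ) : unitCell N m ⊆ Icc (((m : ℝ) - 1) / N) ((m : ℝ) / N) := by
  rintro y (hy | ⟨rfl, rfl⟩)
  · exact Ioc_subset_Icc_self hy
  · simp

theorem eq_max_ceil_of_mem_unitCell {N m : ℕ} {y : ℝ} (hm : 1 ≤ m) (hy : y ∈ unitCell N m) :
    m = max 1 ⌈y * N⌉₊ := by
  rcases hy with ⟨h₁, h₂⟩ | ⟨rfl, rfl⟩
  · rcases N.eq_zero_or_pos with rfl | hN
    · simp at h₁ h₂; linarith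
    have hN' : (0 : ℝ) < N := Nat.cast_pos.2 hN
    rw [div_lt_iff₀ hN'] at h₁
    rw [le_div_iff₀ hN'] at h₂
    have hceil : ⌈y * N⌉₊ = m := by
      rw [Nat.ceil_eq_iff (by omega), Nat.cast_sub hm, Nat.cast_one]
      exact ⟨h₁, h₂⟩
    omega
  · simp

theorem mem_unitCell_max_ceil {N : ℕ} (hN : 0 < N) {y : ℝ} (hy : y ∈ Icc (0 : ℝ) 1) :
    max 1 ⌈y * N⌉₊ ∈ Finset.Icc 1 N ∧ y ∈ unitCell N (max 1 ⌈y * N⌉₊) := by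
  have hN' : (0 : ℝ) < N := Nat.cast_pos.2 hN
  have hle : ⌈y * N⌉₊ ≤ N := Nat.ceil_le.2 (mul_le_of_le_one_left hN'.le hy.2)
  refine ⟨Finset.mem_Icc.2 ⟨le_max_left _ _, max_le hN hle⟩, ?_⟩
  rcases hy.1.eq_or_lt with rfl | hpos
  · simp [unitCell]
  have hceil : 1 ≤ ⌈y * N⌉₊ := Nat.one_le_ceil_iff.2 (mul_pos hpos hN')
  rw [max_eq_right hceil]
  refine Or.inl ⟨?_, ?_⟩
  · rw [div_lt_iff₀ hN', sub_lt_iff_lt_add]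
    exact Nat.ceil_lt_add_one (mul_pos hpos hN').le
  · rw [le_div_iff₀ hN']
    exact Nat.le_ceil _

def quantizerCell {ι : Type*} (w : ι → ℝ → ℝ) (N i : ι → ℕ) : Set (ι → ℝ) :=
  univ.pi fun j => {t ∈ Icc 0 1 | w j t ∈ unitCell (N j) (i j)}

theorem quantizerCell_subset {ι : Type*} (w : ι → ℝ → ℝ) (N i : ι → ℕ) :
    quantizerCell w N i ⊆ univ.pi fun _ => Icc 0 1 :=
  pi_mono fun _ _ => sep_subset _ _

theorem pos_of_mem_piFinset_Icc_one {ι : Type*} [Fintype ι] [DecidableEq ι] {N i : ι → ℕ}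
    (hi : i ∈ Fintype.piFinset fun j => Finset.Icc 1 (N j)) (j : ι) : 0 < N j := by
  have := Finset.mem_Icc.1 (Fintype.mem_piFinset.1 hi j)
  omega

theorem pairwiseDisjoint_quantizerCell {ι : Type*} [Fintype ι] [DecidableEq ι] (w : ι → ℝ → ℝ)
    (N : ι → ℕ) :
    (Fintype.piFinset fun j => Finset.Icc 1 (N j) : Set (ι → ℕ)).PairwiseDisjoint
      (quantizerCell w N) := by
  intro i hi i' hi' hne
  obtain ⟨j, hj⟩ := Function.ne_iff.1 hne
  simp only [Finset.mem_coe, Fintype.mem_piFinset, Finset.mem_Icc] at hi hi'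
  refine disjoint_left.2 fun x hx hx' => hj ?_
  rw [eq_max_ceil_of_mem_unitCell (hi j).1 (hx j (mem_univ j)).2,
    eq_max_ceil_of_mem_unitCell (hi' j).1 (hx' j (mem_univ j)).2]

theorem biUnion_quantizerCell {ι : Type*} [Fintype ι] [DecidableEq ι] {w : ι → ℝ → ℝ}
    (hw : ∀ j, MapsTo (w j) (Icc 0 1) (Icc 0 1)) {N : ι → ℕ} (hN : ∀ j, 0 < N j) :
    ⋃ i ∈ Fintype.piFinset (fun j => Finset.Icc 1 (N j)), quantizerCell w N i =
      univ.pi fun _ => Icc 0 1 := by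
  refine Subset.antisymm (iUnion₂_subset fun i _ => quantizerCell_subset w N i)
    fun x hx => mem_iUnion₂.2 ⟨fun j => max 1 ⌈w j (x j) * N j⌉₊, ?_, fun j _ => ?_⟩
  · exact Fintype.mem_piFinset.2 fun j =>
      (mem_unitCell_max_ceil (hN j) (hw j (hx j (mem_univ j)))).1
  · exact ⟨hx j (mem_univ j), (mem_unitCell_max_ceil (hN j) (hw j (hx j (mem_univ j)))).2⟩

theorem measurableSet_of_Ioc_subset_of_subset_Icc {C : Set ℝ} {a b : ℝ} (h₁ : Ioc a b ⊆ C)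
    (h₂ : C ⊆ Icc a b) : MeasurableSet C := by
  have hC : C = Ioc a b ∪ (C ∩ {a}) := by
    refine Subset.antisymm (fun t ht => ?_) (union_subset h₁ inter_subset_left)
    rcases (h₂ ht).1.eq_or_lt with rfl | hat
    · exact Or.inr ⟨ht, rfl⟩
    · exact Or.inl ⟨hat, (h₂ ht).2⟩
  rw [hC]
  exact measurableSet_Ioc.union (subsingleton_singleton.anti inter_subset_right).measurableSet

theorem measureReal_pi_eq_prod_of_Ioc_subset_of_subset_Icc {ι : Type*} [Fintype ι]
    {C : ι → Set ℝ} {a b : ι → ℝ} (hab : ∀ j, a j ≤ b j) (h₁ : ∀ j, Ioc (a j) (b j) ⊆ C j)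
    (h₂ : ∀ j, C j ⊆ Icc (a j) (b j)) :
    volume.real (univ.pi C) = ∏ j, (b j - a j) := by
  rw [measureReal_def, volume_pi_pi, ENNReal.toReal_prod]
  refine Finset.prod_congr rfl fun j _ => ?_
  rw [le_antisymm ((measure_mono (h₂ j)).trans Real.volume_Icc.le)
    (Real.volume_Ioc.symm.le.trans (measure_mono (h₁ j))),
    ENNReal.toReal_ofReal (sub_nonneg.2 (hab j))]

theorem eventually_forall_one_div_div_le {ι : Type*} [Fintype ι] {lam : ι → ℝ → ℝ}
    (hlam_cont : ∀ j, ContinuousOn (lam j) (Icc 0 1))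
    (hlam : ∀ j, ∀ x ∈ Icc (0 : ℝ) 1, 0 < lam j x) {δ : ι → ℝ} (hδ : ∀ j, 0 < δ j) :
    ∀ᶠ N : ι → ℕ in atTop, ∀ j, 0 < N j ∧ ∀ t ∈ Icc (0 : ℝ) 1, 1 / N j / lam j t ≤ δ j := by
  refine eventually_all.2 fun j => ?_
  obtain ⟨t₀, ht₀, hmin⟩ :=
    isCompact_Icc.exists_isMinOn (nonempty_Icc.2 zero_le_one) (hlam_cont j)
  have hc := hlam j t₀ ht₀
  have hproj : Tendsto (fun N : ι → ℕ => N j) atTop atTop :=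
    Monotone.tendsto_atTop_atTop (fun _ _ h => h j) fun b => ⟨fun _ => b, le_rfl⟩
  filter_upwards [hproj.eventually_gt_atTop 0, hproj.eventually
    (tendsto_natCast_atTop_atTop.eventually_ge_atTop (1 / (δ j * lam j t₀)))] with N hN hNδ
  have hN' : (0 : ℝ) < N j := Nat.cast_pos.2 hN
  refine ⟨hN, fun t ht => ?_⟩
  calc 1 / N j / lam j t ≤ 1 / N j / lam j t₀ :=
        div_le_div_of_nonneg_left (by positivity) hc (hmin ht)
    _ ≤ δ j := by
        rw [div_le_iff₀ (mul_pos (hδ j) hc)] at hNδ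
        rw [div_div, div_le_iff₀ (by positivity)]
        linarith

section Quantizer

variable {ι : Type*} [Fintype ι] [DecidableEq ι] {w lam : ι → ℝ → ℝ}

theorem exists_Icc_bounds_quantizerCell (hw0 : ∀ j, w j 0 = 0) (hw1 : ∀ j, w j 1 = 1)
    (hw : ∀ j, ∀ x ∈ Icc (0 : ℝ) 1, HasDerivWithinAt (w j) (lam j x) (Icc 0 1) x)
    (hlam : ∀ j, ∀ x ∈ Icc (0 : ℝ) 1, 0 < lam j x) {N i : ι → ℕ}
    (hi : i ∈ Fintype.piFinset fun j => Finset.Icc 1 (N j)) :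
    ∃ a b ζ : ι → ℝ, ∀ j, Icc (a j) (b j) ⊆ Icc 0 1 ∧
      Ioc (a j) (b j) ⊆ {t ∈ Icc 0 1 | w j t ∈ unitCell (N j) (i j)} ∧
      {t ∈ Icc 0 1 | w j t ∈ unitCell (N j) (i j)} ⊆ Icc (a j) (b j) ∧
      ζ j ∈ Icc (a j) (b j) ∧ b j - a j = 1 / N j / lam j (ζ j) := by
  have h : ∀ j, ∃ a b ζ, Icc a b ⊆ Icc 0 1 ∧
      Ioc a b ⊆ {t ∈ Icc 0 1 | w j t ∈ unitCell (N j) (i j)} ∧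
      {t ∈ Icc 0 1 | w j t ∈ unitCell (N j) (i j)} ⊆ Icc a b ∧
      ζ ∈ Icc a b ∧ b - a = 1 / N j / lam j ζ := fun j => by
    obtain ⟨h₁, h₂⟩ := Finset.mem_Icc.1 (Fintype.mem_piFinset.1 hi j)
    have hN : (0 : ℝ) < N j := Nat.cast_pos.2 (pos_of_mem_piFinset_Icc_one hi j)
    have h₁' : (1 : ℝ) ≤ i j := Nat.one_le_cast.2 h₁
    have h₂' : (i j : ℝ) ≤ N j := Nat.cast_le.2 h₂
    have hlen : (i j : ℝ) / N j - ((i j : ℝ) - 1) / N j = 1 / N j := by ring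
    simpa only [hlen] using Compander.exists_interval_preimage (hw0 j) (hw1 j) (hw j) (hlam j)
      (div_nonneg (sub_nonneg.2 h₁') hN.le) (div_lt_div_of_pos_right (sub_one_lt _) hN)
      ((div_le_one hN).2 h₂') (Ioc_subset_unitCell _ _) (unitCell_subset_Icc _ _)
  choose a b ζ hab using h
  exact ⟨a, b, ζ, hab⟩

theorem measurableSet_quantizerCell (hw0 : ∀ j, w j 0 = 0) (hw1 : ∀ j, w j 1 = 1)
    (hw : ∀ j, ∀ x ∈ Icc (0 : ℝ) 1, HasDerivWithinAt (w j) (lam j x) (Icc 0 1) x)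
    (hlam : ∀ j, ∀ x ∈ Icc (0 : ℝ) 1, 0 < lam j x) {N i : ι → ℕ}
    (hi : i ∈ Fintype.piFinset fun j => Finset.Icc 1 (N j)) :
    MeasurableSet (quantizerCell w N i) := by
  obtain ⟨a, b, ζ, h⟩ := exists_Icc_bounds_quantizerCell hw0 hw1 hw hlam hi
  exact MeasurableSet.univ_pi fun j =>
    measurableSet_of_Ioc_subset_of_subset_Icc (h j).2.1 (h j).2.2.1

theorem abs_logb_density_sub_logb_mass_le (hw0 : ∀ j, w j 0 = 0) (hw1 : ∀ j, w j 1 = 1)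
    (hw : ∀ j, ∀ x ∈ Icc (0 : ℝ) 1, HasDerivWithinAt (w j) (lam j x) (Icc 0 1) x)
    (hlam : ∀ j, ∀ x ∈ Icc (0 : ℝ) 1, 0 < lam j x) {f : (ι → ℝ) → ℝ}
    (hf : IntegrableOn f (univ.pi fun _ => Icc 0 1))
    (hf_pos : ∀ x ∈ univ.pi (fun _ => Icc (0 : ℝ) 1), 0 < f x) {δ : ι → ℝ} {η : ℝ}
    (hF : ∀ x ∈ univ.pi (fun _ => Icc (0 : ℝ) 1), ∀ y ∈ univ.pi (fun _ => Icc (0 : ℝ) 1),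
      (∀ j, dist (x j) (y j) ≤ δ j) → |Real.logb 2 (f x) - Real.logb 2 (f y)| ≤ η)
    (hΛ : ∀ j, ∀ s ∈ Icc (0 : ℝ) 1, ∀ t ∈ Icc (0 : ℝ) 1, dist s t ≤ δ j →
      |Real.logb 2 (lam j s) - Real.logb 2 (lam j t)| ≤ η)
    {N i : ι → ℕ} (hfine : ∀ j, ∀ t ∈ Icc (0 : ℝ) 1, 1 / N j / lam j t ≤ δ j)
    (hi : i ∈ Fintype.piFinset fun j => Finset.Icc 1 (N j)) {x : ι → ℝ}
    (hx : x ∈ quantizerCell w N i) :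
    |(Real.logb 2 (f x) - ∑ j, Real.logb 2 (lam j (x j))) -
        (Real.logb 2 (∫ y in quantizerCell w N i, f y) + ∑ j, Real.logb 2 (N j))| ≤
      (Fintype.card ι + 1) * η := by
  obtain ⟨a, b, ζ, h⟩ := exists_Icc_bounds_quantizerCell hw0 hw1 hw hlam hi
  set S := quantizerCell w N i
  have hN : ∀ j, (0 : ℝ) < N j := fun j => Nat.cast_pos.2 (pos_of_mem_piFinset_Icc_one hi j)
  have hζ : ∀ j, ζ j ∈ Icc (0 : ℝ) 1 := fun j => (h j).1 (h j).2.2.2.1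
  have hside : ∀ j, 0 < 1 / N j / lam j (ζ j) := fun j =>
    div_pos (one_div_pos.2 (hN j)) (hlam j _ (hζ j))
  have hSsub : ∀ y ∈ S, ∀ j, y j ∈ Icc (a j) (b j) :=
    fun y hy j => (h j).2.2.1 (hy j (mem_univ j))
  have hSbox := quantizerCell_subset w N i
  have hclose : ∀ j, ∀ s ∈ Icc (a j) (b j), ∀ t ∈ Icc (a j) (b j), dist s t ≤ δ j :=
    fun j s hs t ht => (Real.dist_le_of_mem_Icc hs ht).trans <|
      (h j).2.2.2.2 ▸ hfine j (ζ j) (hζ j)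
  have hvol : volume.real S = ∏ j, 1 / N j / lam j (ζ j) := by
    rw [← Finset.prod_congr rfl fun j _ => (h j).2.2.2.2]
    exact measureReal_pi_eq_prod_of_Ioc_subset_of_subset_Icc
      (fun j => ((h j).2.2.2.1.1.trans (h j).2.2.2.1.2)) (fun j => (h j).2.1) fun j => (h j).2.2.1
  have hmass := abs_logb_setIntegral_sub_logb_measureReal_sub_le one_lt_two
    (measurableSet_quantizerCell hw0 hw1 hw hlam hi)
    (hvol ▸ Finset.prod_pos fun j _ => hside j) (hf.mono_set hSbox)
    (fun y hy => hf_pos y (hSbox hy)) (u := Real.logb 2 (f x))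
    fun y hy => hF y (hSbox hy) x (hSbox hx) fun j => hclose j _ (hSsub y hy j) _ (hSsub x hx j)
  have hlogvol : Real.logb 2 (volume.real S) =
      -∑ j, Real.logb 2 (N j) - ∑ j, Real.logb 2 (lam j (ζ j)) := by
    rw [hvol, Real.logb_prod _ _ fun j _ => (hside j).ne', ← Finset.sum_neg_distrib,
      ← Finset.sum_sub_distrib]
    refine Finset.sum_congr rfl fun j _ => ?_
    rw [Real.logb_div (one_div_pos.2 (hN j)).ne' (hlam j _ (hζ j)).ne', one_div, Real.logb_inv]
  have hΛx : ∀ j, |Real.logb 2 (lam j (x j)) - Real.logb 2 (lam j (ζ j))| ≤ η := fun j =>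
    hΛ j _ (hSbox hx j (mem_univ j)) _ (hζ j) (hclose j _ (hSsub x hx j) _ (h j).2.2.2.1)
  calc _ = |-(Real.logb 2 (∫ y in S, f y) - Real.logb 2 (volume.real S) - Real.logb 2 (f x)) -
        ∑ j, (Real.logb 2 (lam j (x j)) - Real.logb 2 (lam j (ζ j)))| := by
        rw [hlogvol, Finset.sum_sub_distrib]; ring_nf
    _ ≤ η + ∑ _j : ι, η := (abs_sub _ _).trans <| add_le_add (by rwa [abs_neg]) <|
        (Finset.abs_sum_le_sum_abs _ _).trans (Finset.sum_le_sum fun j _ => hΛx j)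
    _ = (Fintype.card ι + 1) * η := by simp; ring

noncomputable def quantizerEntropy (f : (ι → ℝ) → ℝ) (w : ι → ℝ → ℝ) (N : ι → ℕ) : ℝ :=
  -∑ i ∈ Fintype.piFinset (fun j => Finset.Icc 1 (N j)),
    (∫ x in quantizerCell w N i, f x) * Real.logb 2 (∫ x in quantizerCell w N i, f x)

theorem abs_quantizerEntropy_sub_le (hw0 : ∀ j, w j 0 = 0) (hw1 : ∀ j, w j 1 = 1)
    (hw : ∀ j, ∀ x ∈ Icc (0 : ℝ) 1, HasDerivWithinAt (w j) (lam j x) (Icc 0 1) x)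
    (hlam : ∀ j, ∀ x ∈ Icc (0 : ℝ) 1, 0 < lam j x) {f : (ι → ℝ) → ℝ}
    (hf : IntegrableOn f (univ.pi fun _ => Icc 0 1))
    (hf_pos : ∀ x ∈ univ.pi (fun _ => Icc (0 : ℝ) 1), 0 < f x)
    (hf_one : ∫ x in univ.pi (fun _ => Icc (0 : ℝ) 1), f x = 1)
    (hfT : IntegrableOn (fun x => f x * (Real.logb 2 (f x) - ∑ j, Real.logb 2 (lam j (x j))))
      (univ.pi fun _ => Icc 0 1)) {δ : ι → ℝ} {η : ℝ}
    (hF : ∀ x ∈ univ.pi (fun _ => Icc (0 : ℝ) 1), ∀ y ∈ univ.pi (fun _ => Icc (0 : ℝ) 1),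
      (∀ j, dist (x j) (y j) ≤ δ j) → |Real.logb 2 (f x) - Real.logb 2 (f y)| ≤ η)
    (hΛ : ∀ j, ∀ s ∈ Icc (0 : ℝ) 1, ∀ t ∈ Icc (0 : ℝ) 1, dist s t ≤ δ j →
      |Real.logb 2 (lam j s) - Real.logb 2 (lam j t)| ≤ η)
    {N : ι → ℕ} (hN : ∀ j, 0 < N j) (hfine : ∀ j, ∀ t ∈ Icc (0 : ℝ) 1, 1 / N j / lam j t ≤ δ j) :
    |quantizerEntropy f w N - ∑ j, Real.logb 2 (N j) -
        -∫ x in univ.pi (fun _ => Icc (0 : ℝ) 1),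
          f x * (Real.logb 2 (f x) - ∑ j, Real.logb 2 (lam j (x j)))| ≤
      (Fintype.card ι + 1) * η := by
  set I := Fintype.piFinset fun j => Finset.Icc 1 (N j)
  have hunion := biUnion_quantizerCell (fun j => Compander.mapsTo (hw0 j) (hw1 j)
    (Compander.strictMonoOn (hw j) (hlam j)).monotoneOn) hN
  have hmeas : ∀ i ∈ I, MeasurableSet (quantizerCell w N i) :=
    fun i hi => measurableSet_quantizerCell hw0 hw1 hw hlam hi
  have hmass_sum : ∑ i ∈ I, ∫ x in quantizerCell w N i, f x = 1 := by
    rw [← integral_biUnion_finset I hmeas (pairwiseDisjoint_quantizerCell w N)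
      fun i _ => hf.mono_set (quantizerCell_subset w N i), hunion, hf_one]
  have hentropy : quantizerEntropy f w N - ∑ j, Real.logb 2 (N j) =
      -∑ i ∈ I, (∫ x in quantizerCell w N i, f x) *
        (Real.logb 2 (∫ x in quantizerCell w N i, f x) + ∑ j, Real.logb 2 (N j)) := by
    simp only [quantizerEntropy, mul_add, Finset.sum_add_distrib, ← Finset.sum_mul, hmass_sum]
    ring
  have hestimate := abs_sum_setIntegral_mul_sub_setIntegral_biUnion_le I hmeas
    (pairwiseDisjoint_quantizerCell w N)
    (fun i _ x hx => (hf_pos x (quantizerCell_subset w N i hx)).le) (hunion ▸ hf) (hunion ▸ hfT)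
    fun i hi x hx => abs_logb_density_sub_logb_mass_le hw0 hw1 hw hlam hf hf_pos hF hΛ hfine hi hx
  rw [hunion, hf_one, mul_one] at hestimate
  rwa [hentropy, neg_sub_neg, abs_sub_comm]

theorem tendsto_quantizerEntropy_sub_sum_logb (hw0 : ∀ j, w j 0 = 0) (hw1 : ∀ j, w j 1 = 1)
    (hw : ∀ j, ∀ x ∈ Icc (0 : ℝ) 1, HasDerivWithinAt (w j) (lam j x) (Icc 0 1) x)
    (hlam_cont : ∀ j, ContinuousOn (lam j) (Icc 0 1))
    (hlam : ∀ j, ∀ x ∈ Icc (0 : ℝ) 1, 0 < lam j x) {f : (ι → ℝ) → ℝ}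
    (hf_cont : ContinuousOn f (univ.pi fun _ => Icc 0 1))
    (hf_pos : ∀ x ∈ univ.pi (fun _ => Icc (0 : ℝ) 1), 0 < f x)
    (hf_one : ∫ x in univ.pi (fun _ => Icc (0 : ℝ) 1), f x = 1) :
    Tendsto (fun N => quantizerEntropy f w N - ∑ j, Real.logb 2 (N j)) atTop
      (𝓝 ((-∫ x in univ.pi (fun _ => Icc (0 : ℝ) 1), f x * Real.logb 2 (f x)) +
        ∑ j, ∫ x in univ.pi (fun _ => Icc (0 : ℝ) 1), f x * Real.logb 2 (lam j (x j)))) := by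
  have hbox : IsCompact (univ.pi fun _ : ι => Icc (0 : ℝ) 1) :=
    isCompact_univ_pi fun _ => isCompact_Icc
  have hlogf : ContinuousOn (fun x => Real.logb 2 (f x)) (univ.pi fun _ => Icc 0 1) :=
    hf_cont.logb fun x hx => (hf_pos x hx).ne'
  have hloglam : ∀ j, ContinuousOn (fun t => Real.logb 2 (lam j t)) (Icc 0 1) :=
    fun j => (hlam_cont j).logb fun t ht => (hlam j t ht).ne'
  have hloglam_x : ∀ j, ContinuousOn (fun x : ι → ℝ => Real.logb 2 (lam j (x j)))
      (univ.pi fun _ => Icc 0 1) :=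
    fun j => (hloglam j).comp (continuous_apply j).continuousOn fun x hx => hx j (mem_univ j)
  have hT : ContinuousOn (fun x => f x * (Real.logb 2 (f x) - ∑ j, Real.logb 2 (lam j (x j))))
      (univ.pi fun _ => Icc 0 1) :=
    hf_cont.mul (hlogf.sub (continuousOn_finsetSum Finset.univ fun j _ => hloglam_x j))
  rw [neg_add_eq_sub, ← neg_sub, ← integral_mul_sub_sum Finset.univ
    ((hf_cont.mul hlogf).integrableOn_compact hbox)
    fun j _ => (hf_cont.mul (hloglam_x j)).integrableOn_compact hbox]
  refine Metric.tendsto_nhds.2 fun ε hε => ?_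
  set η := ε / (2 * (Fintype.card ι + 1))
  have hη : 0 < η := by positivity
  obtain ⟨δf, hδf, hF⟩ := Metric.uniformContinuousOn_iff_le.1
    (hbox.uniformContinuousOn_of_continuous hlogf) η hη
  choose δlam hδlam hΛ using fun j => Metric.uniformContinuousOn_iff_le.1
    (isCompact_Icc.uniformContinuousOn_of_continuous (hloglam j)) η hη
  filter_upwards [eventually_forall_one_div_div_le hlam_cont hlam
    (δ := fun j => min δf (δlam j)) fun j => lt_min hδf (hδlam j)] with N hN
  rw [Real.dist_eq]
  refine (abs_quantizerEntropy_sub_le (η := η) hw0 hw1 hw hlam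
    (hf_cont.integrableOn_compact hbox) hf_pos hf_one (hT.integrableOn_compact hbox)
    (fun x hx y hy hxy => ?_) (fun j s hs t ht hst => ?_) (fun j => (hN j).1)
    fun j => (hN j).2).trans_lt ?_
  · rw [← Real.dist_eq]
    exact hF x hx y hy ((dist_pi_le_iff hδf.le).2 fun j => (hxy j).trans (min_le_left _ _))
  · rw [← Real.dist_eq]
    exact hΛ j s hs t ht (hst.trans (min_le_right _ _))
  · have : (Fintype.card ι + 1) * η = ε / 2 := by simp only [η]; field_simp
    linarith

end Quantizer

section Density

variable {Ω α : Type*} [MeasurableSpace Ω] [MeasurableSpace α] {μ : Measure Ω} {ν : Measure α}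
  {X : Ω → α} {f : α → ℝ}

theorem toReal_measure_preimage_eq_setIntegral (hX : Measurable X)
    (hf : μ.map X = ν.withDensity fun x => ENNReal.ofReal (f x)) {S : Set α}
    (hS : MeasurableSet S) (hf0 : ∀ x ∈ S, 0 ≤ f x)
    (hfm : AEStronglyMeasurable f (ν.restrict S)) :
    (μ (X ⁻¹' S)).toReal = ∫ x in S, f x ∂ν := by
  rw [← Measure.map_apply hX hS, hf, withDensity_apply _ hS,
    integral_eq_lintegral_of_nonneg_ae ((ae_restrict_iff' hS).2 (Eventually.of_forall hf0)) hfm]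

theorem measure_preimage_eq_one_of_density [IsProbabilityMeasure μ] (hX : Measurable X)
    (hf : μ.map X = ν.withDensity fun x => ENNReal.ofReal (f x)) {B : Set α}
    (hB : MeasurableSet B) (hsupp : ∀ x ∉ B, f x = 0) : μ (X ⁻¹' B) = 1 := by
  have hsupp' : Function.support (fun x => ENNReal.ofReal (f x)) ⊆ B := fun x hx => by
    by_contra hxB
    exact hx (by simp [hsupp x hxB])
  rw [← Measure.map_apply hX hB, hf, withDensity_apply _ hB,
    setLIntegral_eq_of_support_subset hsupp',
    ← setLIntegral_univ, ← withDensity_apply _ MeasurableSet.univ, ← hf,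
    Measure.map_apply hX MeasurableSet.univ, preimage_univ, measure_univ]

end Density

theorem tendsto_floor_rpow_atTop {ι : Type*} [Finite ι] {α : ι → ℝ} (hα : ∀ j, 0 < α j) :
    Tendsto (fun K : ℕ => fun j => ⌊(K : ℝ) ^ α j⌋₊) atTop atTop :=
  tendsto_atTop.2 fun b => eventually_all.2 fun j =>
    (tendsto_nat_floor_atTop.comp ((tendsto_rpow_atTop (hα j)).comp
      tendsto_natCast_atTop_atTop)).eventually_ge_atTop (b j)

theorem distributed_joint_entropy_asymptotics_general
    (n : ℕ) {Ω : Type*} [MeasurableSpace Ω] (μ : Measure Ω) [IsProbabilityMeasure μ]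
    (Box : Set (Fin n → ℝ)) (hBox : Box = Set.univ.pi fun _ => Icc (0 : ℝ) 1)
    (X : Ω → Fin n → ℝ) (hX : Measurable X)
    (f : (Fin n → ℝ) → ℝ)
    (hf_density : Measure.map X μ = volume.withDensity fun x => ENNReal.ofReal (f x))
    (hf_supp : ∀ x ∉ Box, f x = 0)
    (hf_cont : ContinuousOn f Box)
    (hf_pos : ∀ x ∈ Box, 0 < f x)
    (w lam : Fin n → ℝ → ℝ)
    (hw0 : ∀ j, w j 0 = 0) (hw1 : ∀ j, w j 1 = 1)
    (hw_deriv : ∀ j, ∀ x ∈ Icc (0 : ℝ) 1, HasDerivWithinAt (w j) (lam j x) (Icc 0 1) x)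
    (hlam_cont : ∀ j, ContinuousOn (lam j) (Icc 0 1))
    (hlam_pos : ∀ j, ∀ x ∈ Icc (0 : ℝ) 1, 0 < lam j x)
    (α : Fin n → ℝ) (hα : ∀ j, 0 < α j)
    (Kres : ℕ → Fin n → ℕ) (hKres : ∀ K j, Kres K j = ⌊(K : ℝ) ^ (α j)⌋₊)
    (Ssc : Fin n → ℕ → ℕ → Set ℝ)
    (hSsc : ∀ j Kc i, Ssc j Kc i =
      {t ∈ Icc (0 : ℝ) 1 | w j t ∈ Ioc (((i : ℝ) - 1) / Kc) ((i : ℝ) / Kc)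
        ∨ (i = 1 ∧ w j t = 0)})
    (Scell : ℕ → (Fin n → ℕ) → Set (Fin n → ℝ))
    (hScell : ∀ K i, Scell K i = {x | ∀ j, x j ∈ Ssc j (Kres K j) (i j)})
    (H : ℕ → ℝ)
    (hH : ∀ K, H K = -∑ i ∈ Fintype.piFinset (fun j => Finset.Icc 1 (Kres K j)),
      (μ (X ⁻¹' Scell K i)).toReal * Real.logb 2 (μ (X ⁻¹' Scell K i)).toReal) :
    Tendsto (fun K : ℕ => H K - ∑ j, Real.logb 2 (Kres K j)) atTop
      (𝓝 ((-∫ x in Box, f x * Real.logb 2 (f x)) +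
          ∑ j, ∫ x in Box, f x * Real.logb 2 (lam j (x j)))) := by
  subst hBox
  have hbox_meas : MeasurableSet (univ.pi fun _ : Fin n => Icc (0 : ℝ) 1) :=
    MeasurableSet.univ_pi fun _ => measurableSet_Icc
  have hf_int : IntegrableOn f (univ.pi fun _ => Icc 0 1) :=
    hf_cont.integrableOn_compact (isCompact_univ_pi fun _ => isCompact_Icc)
  have hmass : ∀ K, ∀ i ∈ Fintype.piFinset (fun j => Finset.Icc 1 (Kres K j)),
      (μ (X ⁻¹' Scell K i)).toReal = ∫ x in quantizerCell w (Kres K) i, f x := fun K i hi => by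
    have hsub := quantizerCell_subset w (Kres K) i
    have hcell : Scell K i = quantizerCell w (Kres K) i := by
      ext x; simp [hScell, hSsc, quantizerCell, unitCell]
    rw [hcell, toReal_measure_preimage_eq_setIntegral hX hf_density
      (measurableSet_quantizerCell hw0 hw1 hw_deriv hlam_pos hi)
      (fun x hx => (hf_pos x (hsub hx)).le) (hf_int.mono_set hsub).aestronglyMeasurable]
  have hf_one : ∫ x in univ.pi (fun _ => Icc (0 : ℝ) 1), f x = 1 := by
    rw [← toReal_measure_preimage_eq_setIntegral hX hf_density hbox_meas
      (fun x hx => (hf_pos x hx).le) hf_int.aestronglyMeasurable,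
      measure_preimage_eq_one_of_density hX hf_density hbox_meas hf_supp, ENNReal.toReal_one]
  have hKres_lim : Tendsto Kres atTop atTop := by
    convert tendsto_floor_rpow_atTop hα using 1
    exact funext fun K => funext (hKres K)
  refine ((tendsto_quantizerEntropy_sub_sum_logb hw0 hw1 hw_deriv hlam_cont hlam_pos hf_cont
    hf_pos hf_one).comp hKres_lim).congr fun K => ?_
  simp only [Function.comp, hH, quantizerEntropy]
  rw [Finset.sum_congr rfl fun i hi => by rw [← hmass K i hi]]

/-- Lemma 7 (joint-entropy resolution-rate): for a distributed companding quantizer with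
companders `w j` (point densities `lam j`) applied at resolutions `K_j = ⌊K^{α_j}⌋` to a
source vector with joint density `f` continuous and strictly positive on `[0,1]ⁿ`, the
joint output entropy `H_K` satisfies
`H_K − ∑_j log₂ K_j → h(X₁,…,Xₙ) + ∑_j E[log₂ λ_j(X_j)]`. -/
theorem distributed_joint_entropy_asymptotics
    (n : ℕ) {Ω : Type*} [MeasurableSpace Ω] (μ : Measure Ω) [IsProbabilityMeasure μ]
    (Box : Set (Fin n → ℝ)) (hBox : Box = Set.univ.pi fun _ => Icc (0 : ℝ) 1)
    (X : Ω → Fin n → ℝ) (hX : Measurable X)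
    (f : (Fin n → ℝ) → ℝ)
    (hf_density : Measure.map X μ = volume.withDensity fun x => ENNReal.ofReal (f x))
    (hf_supp : ∀ x ∉ Box, f x = 0)
    (hf_cont : ContinuousOn f Box)
    (hf_pos : ∀ x ∈ Box, 0 < f x)
    (w lam : Fin n → ℝ → ℝ)
    (hw0 : ∀ j, w j 0 = 0) (hw1 : ∀ j, w j 1 = 1)
    (hw_deriv : ∀ j, ∀ x ∈ Icc (0 : ℝ) 1, HasDerivWithinAt (w j) (lam j x) (Icc 0 1) x)
    (hlam_cont : ∀ j, ContinuousOn (lam j) (Icc 0 1))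
    (hlam_pos : ∀ j, ∀ x ∈ Icc (0 : ℝ) 1, 0 < lam j x)
    (α : Fin n → ℝ) (hα : ∀ j, 0 < α j) (hαsum : (∑ j, α j) = 1)
    (Kres : ℕ → Fin n → ℕ) (hKres : ∀ K j, Kres K j = ⌊(K : ℝ) ^ (α j)⌋₊)
    (Ssc : Fin n → ℕ → ℕ → Set ℝ)
    (hSsc : ∀ j Kc i, Ssc j Kc i =
      {t ∈ Icc (0 : ℝ) 1 | w j t ∈ Ioc (((i : ℝ) - 1) / Kc) ((i : ℝ) / Kc)
        ∨ (i = 1 ∧ w j t = 0)})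
    (Scell : ℕ → (Fin n → ℕ) → Set (Fin n → ℝ))
    (hScell : ∀ K i, Scell K i = {x | ∀ j, x j ∈ Ssc j (Kres K j) (i j)})
    (H : ℕ → ℝ)
    (hH : ∀ K, H K = -∑ i ∈ Fintype.piFinset (fun j => Finset.Icc 1 (Kres K j)),
      (μ (X ⁻¹' Scell K i)).toReal * Real.logb 2 (μ (X ⁻¹' Scell K i)).toReal) :
    Tendsto (fun K : ℕ => H K - ∑ j, Real.logb 2 (Kres K j)) atTop
      (𝓝 ((-∫ x in Box, f x * Real.logb 2 (f x)) +
          ∑ j, ∫ x in Box, f x * Real.logb 2 (lam j (x j)))) :=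
  distributed_joint_entropy_asymptotics_general n μ Box hBox X hX f hf_density hf_supp hf_cont
    hf_pos w lam hw0 hw1 hw_deriv hlam_cont hlam_pos α hα Kres hKres Ssc hSsc Scell hScell H hH
end

section
/- Let c ∈ ℝ and let h : {1, 2, 3, …} → ℝ satisfy lim_{K→∞} ( h(K) − log₂ K ) = c. For R ∈ ℝ with R ≥ h(1), the set {K ≥ 1 : h(K) ≤ R} is nonempty and bounded; let K(R) be its maximum. Then lim_{R→∞} ( log₂ K(R) − (R − c) ) = 0. -/
/-!
Since `h K - log₂ K → c`, the maximal resolution `K = K(R)` tends to infinity and is pinned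
between `h K ≤ R < h (K + 1)`. Hence `log₂ K - (R - c)` lies between
`-(h K - log₂ K - c)` and `-(h (K + 1) - log₂ (K + 1) - c) - (log₂ (K + 1) - log₂ K)`,
and both bounds tend to `0` because consecutive logarithms become arbitrarily close.
-/

open Filter
open scoped Topology

theorem Filter.Tendsto.bddAbove_setOf_le {h : ℕ → ℝ} (hh : Tendsto h atTop atTop) (R : ℝ) :
    BddAbove {K | h K ≤ R} := by
  have hfin : {K | ¬R < h K}.Finite :=
    eventually_cofinite.mp (Nat.cofinite_eq_atTop ▸ hh.eventually_gt_atTop R)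
  simpa only [not_lt] using hfin.bddAbove

theorem tendsto_atTop_of_isGreatest_sublevel {h : ℕ → ℝ} {n : ℝ → ℕ}
    (hn : ∀ᶠ R in atTop, IsGreatest {K | 1 ≤ K ∧ h K ≤ R} (n R)) : Tendsto n atTop atTop := by
  refine tendsto_atTop.mpr fun b => ?_
  filter_upwards [hn, eventually_ge_atTop (h (max b 1))] with R hR hbR
  exact (le_max_left b 1).trans (hR.2 ⟨le_max_right b 1, hbR⟩)

theorem tendsto_sub_sub_of_le_of_lt_succ {α : Type*} {l : Filter α} {f g : ℕ → ℝ} {c : ℝ}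
    {n : α → ℕ} {r : α → ℝ} (hfg : Tendsto (fun k => f k - g k) atTop (𝓝 c))
    (hg : Tendsto (fun k => g (k + 1) - g k) atTop (𝓝 0)) (hn : Tendsto n l atTop)
    (hle : ∀ᶠ x in l, f (n x) ≤ r x) (hlt : ∀ᶠ x in l, r x < f (n x + 1)) :
    Tendsto (fun x => g (n x) - (r x - c)) l (𝓝 0) := by
  have hfg_succ := hfg.comp ((tendsto_add_atTop_nat 1).comp hn)
  have hlower : Tendsto (fun x => c - (f (n x + 1) - g (n x + 1)) - (g (n x + 1) - g (n x)))
      l (𝓝 0) := by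
    simpa using ((tendsto_const_nhds (x := c)).sub hfg_succ).sub (hg.comp hn)
  have hupper : Tendsto (fun x => c - (f (n x) - g (n x))) l (𝓝 0) := by
    simpa using (tendsto_const_nhds (x := c)).sub (hfg.comp hn)
  refine tendsto_of_tendsto_of_tendsto_of_le_of_le' hlower hupper ?_ ?_
  · filter_upwards [hlt] with x hx
    linarith
  · filter_upwards [hle] with x hx
    linarith

/-- Lemma 2 (abstract form): if the output entropy `h(K)` of a quantizer sequence
satisfies `h(K) = log₂ K + c + o(1)`, then for every rate `R ≥ h(1)` the set
`{K ≥ 1 : h(K) ≤ R}` is nonempty and bounded, and its maximum `K(R)` satisfies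
`log₂ K(R) = R − c + o(1)` as `R → ∞`. -/
theorem resolution_rate_asymptotics (c : ℝ) (h : ℕ → ℝ)
    (hlim : Tendsto (fun K : ℕ => h K - Real.logb 2 K) atTop (𝓝 c)) :
    (∀ R : ℝ, h 1 ≤ R →
      ({K : ℕ | 1 ≤ K ∧ h K ≤ R}.Nonempty ∧ BddAbove {K : ℕ | 1 ≤ K ∧ h K ≤ R})) ∧
    (∀ KR : ℝ → ℕ, (∀ R : ℝ, h 1 ≤ R → IsGreatest {K : ℕ | 1 ≤ K ∧ h K ≤ R} (KR R)) →
      Tendsto (fun R : ℝ => Real.logb 2 (KR R) - (R - c)) atTop (𝓝 0)) := by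
  have hh : Tendsto h atTop atTop := by
    simpa using hlim.add_atTop
      ((Real.tendsto_logb_atTop one_lt_two).comp tendsto_natCast_atTop_atTop)
  refine ⟨fun R hR => ⟨⟨1, le_rfl, hR⟩, (hh.bddAbove_setOf_le R).mono fun K hK => hK.2⟩,
    fun KR hKR => ?_⟩
  have hmax : ∀ᶠ R in atTop, IsGreatest {K | 1 ≤ K ∧ h K ≤ R} (KR R) :=
    (eventually_ge_atTop (h 1)).mono hKR
  have hgap : Tendsto (fun K : ℕ => Real.logb 2 ↑(K + 1) - Real.logb 2 K) atTop (𝓝 0) := by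
    simpa using Real.tendsto_logb_nat_add_one_sub_logb (b := 2)
  have hsucc : ∀ᶠ R in atTop, R < h (KR R + 1) := by
    filter_upwards [hmax] with R hR
    by_contra! hle
    have := hR.2 ⟨Nat.le_add_left 1 (KR R), hle⟩
    omega
  exact tendsto_sub_sub_of_le_of_lt_succ hlim hgap (tendsto_atTop_of_isGreatest_sublevel hmax)
    (hmax.mono fun R hR => hR.1.2) hsucc
end

section
/- Let X be a random variable with density f supported on [0,1], and let γ : [0,1] → (0,∞) be measurable with 0 < ∫_0^1 γ(t) dt < ∞ and E[|ln γ(X)|] < ∞. Then for every measurable λ : [0,1] → (0,∞) with ∫_0^1 λ(t) dt = 1 and E[|ln λ(X)|] < ∞, one has E[(γ(X)/λ(X))²] · exp( 2·E[ln λ(X)] ) ≥ exp( 2·E[ln γ(X)] ), where E[(γ(X)/λ(X))²] is allowed to be +∞. Moreover, for the choice λ*(x) = γ(x)/∫_0^1 γ(t) dt, equality holds. -/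
/-!
With `g = 2 (log γ - log λ)`, the integrand `f · (γ/λ)²` is `f · exp g`, so Jensen's
inequality for `exp` under the probability density `f` gives
`E[(γ/λ)²] ≥ exp (2 E[log γ] - 2 E[log λ])`. For `λ = γ / c` the ratio `γ/λ` is the constant
`c` and both sides equal `c² · exp (2 E[log γ] - 2 log c)`.
-/

open MeasureTheory Set

namespace MeasureTheory

variable {α : Type*} [MeasurableSpace α] {μ : Measure α}

theorem ofReal_integral_le_lintegral_ofReal (f : α → ℝ) :
    ENNReal.ofReal (∫ x, f x ∂μ) ≤ ∫⁻ x, ENNReal.ofReal (f x) ∂μ := by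
  by_cases hf : Integrable f μ
  · rw [integral_eq_lintegral_pos_part_sub_lintegral_neg_part hf]
    refine (ENNReal.ofReal_le_ofReal (sub_le_self _ ENNReal.toReal_nonneg)).trans ?_
    exact ENNReal.ofReal_toReal_le
  · simp [integral_undef hf]

variable {f : α → ℝ}

theorem lintegral_ofReal_mul_const_of_integral_eq_one (hf_nonneg : 0 ≤ᵐ[μ] f)
    (hf_one : ∫ x, f x ∂μ = 1) {a : ℝ} (ha : 0 ≤ a) :
    ∫⁻ x, ENNReal.ofReal (f x * a) ∂μ = ENNReal.ofReal a := by
  have hf : Integrable f μ := .of_integral_ne_zero (by simp [hf_one])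
  rw [← ofReal_integral_eq_lintegral_ofReal (hf.mul_const a)
    (hf_nonneg.mono fun x hx => mul_nonneg hx ha), integral_mul_const, hf_one, one_mul]

/-- Jensen's inequality for `exp` under the probability density `f`. The right side is a lower
Lebesgue integral, so it may be infinite; the proof integrates the tangent line of `exp` at the
mean instead of `exp` itself. -/
theorem ofReal_exp_integral_mul_le_lintegral (hf_nonneg : 0 ≤ᵐ[μ] f)
    (hf_one : ∫ x, f x ∂μ = 1) {g : α → ℝ} (hfg : Integrable (fun x => f x * g x) μ) :
    ENNReal.ofReal (Real.exp (∫ x, f x * g x ∂μ)) ≤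
      ∫⁻ x, ENNReal.ofReal (f x * Real.exp (g x)) ∂μ := by
  have hf : Integrable f μ := .of_integral_ne_zero (by simp [hf_one])
  set m := ∫ x, f x * g x ∂μ
  have tangent (y : ℝ) : Real.exp m * (y - m + 1) ≤ Real.exp y := by
    calc Real.exp m * (y - m + 1) ≤ Real.exp m * Real.exp (y - m) :=
          mul_le_mul_of_nonneg_left (Real.add_one_le_exp _) (Real.exp_pos m).le
      _ = Real.exp y := by rw [← Real.exp_add, add_sub_cancel]
  have tangent_integral : ∫ x, f x * (Real.exp m * (g x - m + 1)) ∂μ = Real.exp m := by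
    have hsplit : (fun x => f x * (Real.exp m * (g x - m + 1))) =
        fun x => Real.exp m * (f x * g x + (1 - m) * f x) := by
      ext x; ring
    rw [hsplit, integral_const_mul, integral_add hfg (hf.const_mul _), integral_const_mul,
      hf_one]
    ring
  calc ENNReal.ofReal (Real.exp m)
      = ENNReal.ofReal (∫ x, f x * (Real.exp m * (g x - m + 1)) ∂μ) := by rw [tangent_integral]
    _ ≤ ∫⁻ x, ENNReal.ofReal (f x * (Real.exp m * (g x - m + 1))) ∂μ :=
        ofReal_integral_le_lintegral_ofReal _
    _ ≤ ∫⁻ x, ENNReal.ofReal (f x * Real.exp (g x)) ∂μ :=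
        lintegral_mono_ae <| hf_nonneg.mono fun x hx =>
          ENNReal.ofReal_le_ofReal (mul_le_mul_of_nonneg_left (tangent _) hx)

end MeasureTheory

section PointDensity

variable {α : Type*} [MeasurableSpace α] {μ : Measure α} {f γ : α → ℝ}

/-- `E[(γ/λ)²] · exp (2 E[log λ])`, the factor of the entropy-constrained high-resolution
distortion that depends on the point density `lam`, for a source with density `f` w.r.t. `μ`. -/
noncomputable def entropyConstrainedDistortion (μ : Measure α) (f γ lam : α → ℝ) :
    ENNReal :=
  (∫⁻ x, ENNReal.ofReal (f x * (γ x / lam x) ^ 2) ∂μ) *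
    ENNReal.ofReal (Real.exp (2 * ∫ x, f x * Real.log (lam x) ∂μ))

theorem ofReal_exp_two_integral_mul_log_le_entropyConstrainedDistortion
    (hf_nonneg : 0 ≤ᵐ[μ] f) (hf_one : ∫ x, f x ∂μ = 1) {lam : α → ℝ}
    (hγ_pos : ∀ᵐ x ∂μ, 0 < γ x) (hlam_pos : ∀ᵐ x ∂μ, 0 < lam x)
    (hlogγ : Integrable (fun x => f x * Real.log (γ x)) μ)
    (hloglam : Integrable (fun x => f x * Real.log (lam x)) μ) :
    ENNReal.ofReal (Real.exp (2 * ∫ x, f x * Real.log (γ x) ∂μ)) ≤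
      entropyConstrainedDistortion μ f γ lam := by
  set A := ∫ x, f x * Real.log (γ x) ∂μ
  set B := ∫ x, f x * Real.log (lam x) ∂μ
  set g := fun x => 2 * (Real.log (γ x) - Real.log (lam x))
  have hfg_eq : (fun x => f x * g x) =
      fun x => 2 * (f x * Real.log (γ x) - f x * Real.log (lam x)) := by
    ext x; ring
  have hfg : Integrable (fun x => f x * g x) μ := by
    rw [hfg_eq]; exact (hlogγ.sub hloglam).const_mul 2
  have hfg_integral : ∫ x, f x * g x ∂μ = 2 * A - 2 * B := by
    rw [hfg_eq, integral_const_mul, integral_sub hlogγ hloglam, mul_sub]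
  have hexp_g : ∀ᵐ x ∂μ, Real.exp (g x) = (γ x / lam x) ^ 2 := by
    filter_upwards [hγ_pos, hlam_pos] with x hγx hlamx
    simp only [g]
    rw [← Real.log_div hγx.ne' hlamx.ne', two_mul, Real.exp_add,
      Real.exp_log (div_pos hγx hlamx), sq]
  have jensen := ofReal_exp_integral_mul_le_lintegral hf_nonneg hf_one hfg
  rw [hfg_integral] at jensen
  calc ENNReal.ofReal (Real.exp (2 * A))
      = ENNReal.ofReal (Real.exp (2 * A - 2 * B)) * ENNReal.ofReal (Real.exp (2 * B)) := by
        rw [← ENNReal.ofReal_mul (Real.exp_pos _).le, ← Real.exp_add, sub_add_cancel]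
    _ ≤ (∫⁻ x, ENNReal.ofReal (f x * Real.exp (g x)) ∂μ) *
          ENNReal.ofReal (Real.exp (2 * B)) := by
        gcongr
    _ = entropyConstrainedDistortion μ f γ lam := by
        unfold entropyConstrainedDistortion
        congr 1
        exact lintegral_congr_ae (hexp_g.mono fun x hx => by simp only [hx])

theorem entropyConstrainedDistortion_div_const (hf_nonneg : 0 ≤ᵐ[μ] f)
    (hf_one : ∫ x, f x ∂μ = 1) (hγ_pos : ∀ᵐ x ∂μ, 0 < γ x)
    (hlogγ : Integrable (fun x => f x * Real.log (γ x)) μ) {c : ℝ} (hc : 0 < c) :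
    entropyConstrainedDistortion μ f γ (fun x => γ x / c) =
      ENNReal.ofReal (Real.exp (2 * ∫ x, f x * Real.log (γ x) ∂μ)) := by
  have hf : Integrable f μ := .of_integral_ne_zero (by simp [hf_one])
  have hlintegral : ∫⁻ x, ENNReal.ofReal (f x * (γ x / (γ x / c)) ^ 2) ∂μ =
      ENNReal.ofReal (c ^ 2) := by
    rw [← lintegral_ofReal_mul_const_of_integral_eq_one hf_nonneg hf_one (sq_nonneg c)]
    refine lintegral_congr_ae (hγ_pos.mono fun x hx => ?_)
    simp only [div_div_cancel₀ hx.ne']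
  have hintegral : ∫ x, f x * Real.log (γ x / c) ∂μ =
      ∫ x, f x * Real.log (γ x) ∂μ - Real.log c := by
    rw [← one_mul (Real.log c), ← hf_one, ← integral_mul_const,
      ← integral_sub hlogγ (hf.mul_const _)]
    refine integral_congr_ae (hγ_pos.mono fun x hx => ?_)
    simp only [Real.log_div hx.ne' hc.ne', mul_sub]
  have hexp_log : Real.exp (2 * Real.log c) = c ^ 2 := by
    rw [two_mul, Real.exp_add, Real.exp_log hc, sq]
  unfold entropyConstrainedDistortion
  rw [hlintegral, hintegral, ← ENNReal.ofReal_mul (sq_nonneg c), mul_sub, Real.exp_sub,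
    hexp_log, mul_div_cancel₀ _ (pow_ne_zero 2 hc.ne')]

end PointDensity

theorem jensen_point_density_optimization_general (f γ : ℝ → ℝ)
    (hf_nonneg : ∀ x, 0 ≤ f x)
    (hf_prob : (∫ x in Icc (0 : ℝ) 1, f x) = 1)
    (hγ_pos : ∀ x ∈ Icc (0 : ℝ) 1, 0 < γ x)
    (hγ_int_pos : 0 < ∫ t in Icc (0 : ℝ) 1, γ t)
    (hlogγ : IntegrableOn (fun x => f x * Real.log (γ x)) (Icc 0 1) volume) :
    (∀ lam : ℝ → ℝ, Measurable lam → (∀ x ∈ Icc (0 : ℝ) 1, 0 < lam x) →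
      (∫ t in Icc (0 : ℝ) 1, lam t) = 1 →
      IntegrableOn (fun x => f x * Real.log (lam x)) (Icc 0 1) volume →
      ENNReal.ofReal (Real.exp (2 * ∫ x in Icc (0 : ℝ) 1, f x * Real.log (γ x))) ≤
        (∫⁻ x in Icc (0 : ℝ) 1, ENNReal.ofReal (f x * (γ x / lam x) ^ 2)) *
          ENNReal.ofReal (Real.exp (2 * ∫ x in Icc (0 : ℝ) 1, f x * Real.log (lam x)))) ∧
    ((∫⁻ x in Icc (0 : ℝ) 1,
        ENNReal.ofReal (f x * (γ x / (γ x / ∫ t in Icc (0 : ℝ) 1, γ t)) ^ 2)) *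
      ENNReal.ofReal (Real.exp (2 * ∫ x in Icc (0 : ℝ) 1,
        f x * Real.log (γ x / ∫ t in Icc (0 : ℝ) 1, γ t)))
      = ENNReal.ofReal (Real.exp (2 * ∫ x in Icc (0 : ℝ) 1, f x * Real.log (γ x)))) := by
  have hf_nonneg_ae : 0 ≤ᵐ[volume.restrict (Icc (0 : ℝ) 1)] f := .of_forall hf_nonneg
  have hγ_pos_ae : ∀ᵐ x ∂volume.restrict (Icc (0 : ℝ) 1), 0 < γ x :=
    ae_restrict_of_forall_mem measurableSet_Icc hγ_pos
  refine ⟨fun lam _ hlam_pos _ hloglam => ?_,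
    entropyConstrainedDistortion_div_const hf_nonneg_ae hf_prob hγ_pos_ae hlogγ hγ_int_pos⟩
  exact ofReal_exp_two_integral_mul_log_le_entropyConstrainedDistortion hf_nonneg_ae hf_prob
    hγ_pos_ae (ae_restrict_of_forall_mem measurableSet_Icc hlam_pos) hlogγ hloglam

/-- Jensen-inequality point-density optimization (variable-rate part of Theorem 3):
for `X` with density `f` on `[0,1]` and a positive sensitivity profile `γ`,
`E[(γ(X)/λ(X))²]·exp(2 E[ln λ(X)]) ≥ exp(2 E[ln γ(X)])` for every point density `lam`
with `∫₀¹ lam = 1` and `E[|ln λ(X)|] < ∞`, with equality for `λ* = γ/∫₀¹ γ`. -/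
theorem jensen_point_density_optimization (f γ : ℝ → ℝ)
    (hf_meas : Measurable f) (hf_nonneg : ∀ x, 0 ≤ f x)
    (hf_prob : (∫ x in Icc (0 : ℝ) 1, f x) = 1)
    (hγ_meas : Measurable γ) (hγ_pos : ∀ x ∈ Icc (0 : ℝ) 1, 0 < γ x)
    (hγ_int : IntegrableOn γ (Icc 0 1) volume)
    (hγ_int_pos : 0 < ∫ t in Icc (0 : ℝ) 1, γ t)
    (hlogγ : IntegrableOn (fun x => f x * Real.log (γ x)) (Icc 0 1) volume) :
    (∀ lam : ℝ → ℝ, Measurable lam → (∀ x ∈ Icc (0 : ℝ) 1, 0 < lam x) →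
      (∫ t in Icc (0 : ℝ) 1, lam t) = 1 →
      IntegrableOn (fun x => f x * Real.log (lam x)) (Icc 0 1) volume →
      ENNReal.ofReal (Real.exp (2 * ∫ x in Icc (0 : ℝ) 1, f x * Real.log (γ x))) ≤
        (∫⁻ x in Icc (0 : ℝ) 1, ENNReal.ofReal (f x * (γ x / lam x) ^ 2)) *
          ENNReal.ofReal (Real.exp (2 * ∫ x in Icc (0 : ℝ) 1, f x * Real.log (lam x)))) ∧
    ((∫⁻ x in Icc (0 : ℝ) 1,
        ENNReal.ofReal (f x * (γ x / (γ x / ∫ t in Icc (0 : ℝ) 1, γ t)) ^ 2)) *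
      ENNReal.ofReal (Real.exp (2 * ∫ x in Icc (0 : ℝ) 1,
        f x * Real.log (γ x / ∫ t in Icc (0 : ℝ) 1, γ t)))
      = ENNReal.ofReal (Real.exp (2 * ∫ x in Icc (0 : ℝ) 1, f x * Real.log (γ x)))) :=
  jensen_point_density_optimization_general f γ hf_nonneg hf_prob hγ_pos hγ_int_pos hlogγ
end

section
/- Let n ≥ 1. For each j ∈ {1,…,n} let f_j be a probability density on [0,1] and γ_j : [0,1] → [0,∞) measurable with 0 < ∫_0^1 (f_j(t)·γ_j(t)²)^{1/3} dt < ∞. Then for every R ∈ ℝ, all α₁,…,αₙ > 0 with ∑_j α_j = 1, and all measurable λ_j : [0,1] → [0,∞) with ∫_0^1 λ_j = 1, one has ∑_{j=1}^n (1/12)·2^{−2α_j R} · ∫_0^1 f_j(x)·γ_j(x)²/λ_j(x)² dx ≥ (n/12) · ( ∏_{j=1}^n ‖γ_j² f_j‖_{1/3} )^{1/n} · 2^{−2R/n}, where ‖u‖_{1/3} := (∫_0^1 u(t)^{1/3} dt)³ and the integrals ∫ f_j γ_j²/λ_j² take values in [0,∞]. -/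
/-!
Write `g_j = γ_j² f_j`. Pointwise `g^{1/3} = (g/λ²)^{1/3} · λ^{2/3}`, so Hölder's inequality with
exponents `3` and `3/2` gives `(∫ g^{1/3})³ ≤ (∫ g/λ²) (∫ λ)² = ∫ g/λ²` for every point density
`λ`. With `a_j = (∫ g_j^{1/3})³` it remains to minimise `∑_j 2^{-2α_j R} a_j` over allocations:
by AM–GM it is at least `n (∏_j 2^{-2α_j R} a_j)^{1/n} = n (∏_j a_j)^{1/n} 2^{-2R/n}`,
because `∑_j α_j = 1`.
-/

open MeasureTheory Set
open scoped ENNReal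

theorem rpow_inv_le_div_rpow_mul_rpow {a b : ℝ≥0∞} {k : ℝ} (hk : 0 < k) (hb : b ≠ ∞)
    (hab : a / b ^ k ≠ ∞) :
    a ^ (1 + k)⁻¹ ≤ (a / b ^ k) ^ (1 + k)⁻¹ * b ^ (k * (1 + k)⁻¹) := by
  have hp : 0 < (1 + k)⁻¹ := by positivity
  rcases eq_or_ne b 0 with rfl | hb0
  · have ha : a = 0 := by
      by_contra ha
      simp [ENNReal.zero_rpow_of_pos hk, ENNReal.div_zero ha] at hab
    simp [ha, ENNReal.zero_rpow_of_pos hp]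
  · rw [ENNReal.div_rpow_of_nonneg _ _ hp.le, ← ENNReal.rpow_mul,
      ENNReal.div_mul_cancel (ENNReal.rpow_pos (pos_iff_ne_zero.2 hb0) hb).ne'
        (ENNReal.rpow_ne_top_of_nonneg (by positivity) hb)]

section

variable {α : Type*} [MeasurableSpace α] {μ : Measure α}

theorem lintegral_rpow_inv_le_lintegral_div_rpow_mul {G L : α → ℝ≥0∞} {k : ℝ} (hk : 0 < k)
    (hG : AEMeasurable G μ) (hL : AEMeasurable L μ) (hL_top : ∀ᵐ x ∂μ, L x ≠ ∞)
    (hL0 : ∫⁻ x, L x ∂μ ≠ 0) :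
    ∫⁻ x, G x ^ (1 + k)⁻¹ ∂μ ≤
      (∫⁻ x, G x / L x ^ k ∂μ) ^ (1 + k)⁻¹ * (∫⁻ x, L x ∂μ) ^ (k * (1 + k)⁻¹) := by
  have hD : AEMeasurable (fun x => G x / L x ^ k) μ := hG.div (hL.pow_const k)
  by_cases hD_top : ∫⁻ x, G x / L x ^ k ∂μ = ∞
  · rw [hD_top, ENNReal.top_rpow_of_pos (by positivity), ENNReal.top_mul]
    · exact le_top
    · simp [ENNReal.rpow_eq_zero_iff, hL0, (by positivity : 0 ≤ k * (1 + k)⁻¹)]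
  calc ∫⁻ x, G x ^ (1 + k)⁻¹ ∂μ
      ≤ ∫⁻ x, (G x / L x ^ k) ^ (1 + k)⁻¹ * L x ^ (k * (1 + k)⁻¹) ∂μ := by
        refine lintegral_mono_ae ?_
        filter_upwards [ae_lt_top' hD hD_top, hL_top] with x hx hxL
        exact rpow_inv_le_div_rpow_mul_rpow hk hxL hx.ne
    _ ≤ _ :=
        ENNReal.lintegral_mul_norm_pow_le hD hL (by positivity) (by positivity) (by field_simp)

theorem ofReal_integral_rpow_one_third_cube_le {g lam : α → ℝ} (hg : ∀ x, 0 ≤ g x)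
    (hg_int : Integrable (fun x => g x ^ ((1 : ℝ) / 3)) μ) (hlam : ∀ x, 0 ≤ lam x)
    (hlam_one : ∫ x, lam x ∂μ = 1) :
    ENNReal.ofReal ((∫ x, g x ^ ((1 : ℝ) / 3) ∂μ) ^ 3) ≤
      ∫⁻ x, ENNReal.ofReal (g x) / ENNReal.ofReal (lam x) ^ 2 ∂μ := by
  have hlam_int : Integrable lam μ := .of_integral_ne_zero (by simp [hlam_one])
  have hL_one : ∫⁻ x, ENNReal.ofReal (lam x) ∂μ = 1 := by
    rw [← ofReal_integral_eq_lintegral_ofReal hlam_int (ae_of_all _ hlam), hlam_one,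
      ENNReal.ofReal_one]
  have hG : AEMeasurable (fun x => ENNReal.ofReal (g x)) μ := by
    have hcube : (fun x => (g x ^ ((1 : ℝ) / 3)) ^ 3) = g := funext fun x => by
      rw [← Real.rpow_natCast, ← Real.rpow_mul (hg x)]
      norm_num
    exact (hcube ▸ hg_int.aemeasurable.pow_const 3).ennreal_ofReal
  have hholder := lintegral_rpow_inv_le_lintegral_div_rpow_mul two_pos hG
    hlam_int.aemeasurable.ennreal_ofReal (ae_of_all _ fun _ => ENNReal.ofReal_ne_top)
    (by simp [hL_one])
  rw [hL_one, ENNReal.one_rpow, mul_one] at hholder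
  norm_num [ENNReal.rpow_two] at hholder
  calc ENNReal.ofReal ((∫ x, g x ^ ((1 : ℝ) / 3) ∂μ) ^ 3)
      = (∫⁻ x, ENNReal.ofReal (g x) ^ ((1 : ℝ) / 3) ∂μ) ^ 3 := by
        rw [ENNReal.ofReal_pow (integral_nonneg fun x => Real.rpow_nonneg (hg x) _),
          ofReal_integral_eq_lintegral_ofReal hg_int
            (ae_of_all _ fun x => Real.rpow_nonneg (hg x) _)]
        simp_rw [ENNReal.ofReal_rpow_of_nonneg (hg _) (by norm_num : (0 : ℝ) ≤ 1 / 3)]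
    _ ≤ ((∫⁻ x, ENNReal.ofReal (g x) / ENNReal.ofReal (lam x) ^ 2 ∂μ) ^ ((1 : ℝ) / 3)) ^ 3 := by
        gcongr
    _ = _ := by
        rw [← ENNReal.rpow_natCast, ← ENNReal.rpow_mul]
        norm_num

end

theorem card_mul_prod_rpow_le_sum {ι : Type*} [Fintype ι] (c : ι → ℝ) (hc : ∀ i, 0 ≤ c i) :
    Fintype.card ι * (∏ i, c i) ^ (1 / (Fintype.card ι : ℝ)) ≤ ∑ i, c i := by
  rcases isEmpty_or_nonempty ι with hι | hι
  · simp
  have hN : (0 : ℝ) < Fintype.card ι := by exact_mod_cast Fintype.card_pos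
  have hamgm := Real.geom_mean_le_arith_mean Finset.univ (fun _ => 1) c (by simp)
    (by simpa using hN) (fun i _ => hc i)
  simp only [Real.rpow_one, Finset.sum_const, Finset.card_univ, nsmul_eq_mul, mul_one,
    one_mul] at hamgm
  rw [one_div, mul_comm]
  exact (le_div_iff₀ hN).1 hamgm

theorem card_mul_prod_rpow_mul_rpow_le_sum_rpow_mul {ι : Type*} [Fintype ι] {b : ℝ} (hb : 0 < b)
    (w a : ι → ℝ) (hw : ∑ i, w i = 1) (ha : ∀ i, 0 ≤ a i) :
    Fintype.card ι * (∏ i, a i) ^ (1 / (Fintype.card ι : ℝ)) * b ^ (1 / (Fintype.card ι : ℝ)) ≤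
      ∑ i, b ^ w i * a i := by
  have hprod : ∏ i, b ^ w i * a i = b * ∏ i, a i := by
    rw [Finset.prod_mul_distrib, ← Real.rpow_sum_of_pos hb, hw, Real.rpow_one]
  calc _ = Fintype.card ι * (∏ i, b ^ w i * a i) ^ (1 / (Fintype.card ι : ℝ)) := by
        rw [hprod, Real.mul_rpow hb.le (Finset.prod_nonneg fun i _ => ha i)]
        ring
    _ ≤ _ := card_mul_prod_rpow_le_sum _ fun i => mul_nonneg (Real.rpow_nonneg hb.le _) (ha i)

theorem fixed_rate_distortion_lower_bound_general (n : ℕ)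
    (f γ : Fin n → ℝ → ℝ)
    (hf_nonneg : ∀ j x, 0 ≤ f j x)
    (h13_int : ∀ j, IntegrableOn (fun t => (γ j t ^ 2 * f j t) ^ ((1 : ℝ) / 3))
      (Icc 0 1) volume) :
    ∀ (R : ℝ) (α : Fin n → ℝ), (∀ j, 0 < α j) → (∑ j, α j) = 1 →
    ∀ lam : Fin n → ℝ → ℝ, (∀ j, Measurable (lam j)) → (∀ j x, 0 ≤ lam j x) →
      (∀ j, (∫ t in Icc (0 : ℝ) 1, lam j t) = 1) →
      ENNReal.ofReal (((n : ℝ) / 12) *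
          (∏ j, (∫ t in Icc (0 : ℝ) 1, (γ j t ^ 2 * f j t) ^ ((1 : ℝ) / 3)) ^ 3) ^
            ((1 : ℝ) / n) *
          (2 : ℝ) ^ (-2 * R / n)) ≤
        ∑ j, ENNReal.ofReal ((1 / 12) * (2 : ℝ) ^ (-2 * α j * R)) *
          ∫⁻ x in Icc (0 : ℝ) 1,
            ENNReal.ofReal (f j x * γ j x ^ 2) / (ENNReal.ofReal (lam j x)) ^ 2 := by
  intro R α _ hα_sum lam _ hlam_nonneg hlam_one
  set S : Fin n → ℝ := fun j => ∫ t in Icc (0 : ℝ) 1, (γ j t ^ 2 * f j t) ^ ((1 : ℝ) / 3)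
  have hS_cube : ∀ j, 0 ≤ S j ^ 3 := fun j => pow_nonneg (integral_nonneg fun t =>
    Real.rpow_nonneg (mul_nonneg (sq_nonneg _) (hf_nonneg j t)) _) 3
  have hdensity : ∀ j, ENNReal.ofReal (S j ^ 3) ≤ ∫⁻ x in Icc (0 : ℝ) 1,
      ENNReal.ofReal (f j x * γ j x ^ 2) / (ENNReal.ofReal (lam j x)) ^ 2 := fun j => by
    simpa only [mul_comm (f j _)] using ofReal_integral_rpow_one_third_cube_le
      (fun x => mul_nonneg (sq_nonneg (γ j x)) (hf_nonneg j x)) (h13_int j) (hlam_nonneg j)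
      (hlam_one j)
  have hallocation : (n : ℝ) / 12 * (∏ j, S j ^ 3) ^ ((1 : ℝ) / n) * (2 : ℝ) ^ (-2 * R / n) ≤
      ∑ j, 1 / 12 * (2 : ℝ) ^ (-2 * α j * R) * S j ^ 3 := by
    have h := card_mul_prod_rpow_mul_rpow_le_sum_rpow_mul
      (by positivity : (0 : ℝ) < 2 ^ (-2 * R)) α _ hα_sum hS_cube
    simp only [Fintype.card_fin, ← Real.rpow_mul zero_le_two] at h
    simp_rw [mul_assoc (1 / 12 : ℝ), ← Finset.mul_sum, mul_right_comm (-2 : ℝ) (α _) R,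
      ← mul_one_div (-2 * R)]
    linarith
  calc _ ≤ ENNReal.ofReal (∑ j, 1 / 12 * (2 : ℝ) ^ (-2 * α j * R) * S j ^ 3) :=
        ENNReal.ofReal_le_ofReal hallocation
    _ = ∑ j, ENNReal.ofReal (1 / 12 * (2 : ℝ) ^ (-2 * α j * R)) * ENNReal.ofReal (S j ^ 3) := by
        rw [ENNReal.ofReal_sum_of_nonneg fun j _ => by have := hS_cube j; positivity]
        exact Finset.sum_congr rfl fun j _ => ENNReal.ofReal_mul (by positivity)
    _ ≤ _ := by gcongr with j; exact hdensity j

/-- Fixed-rate distortion lower bound with optimal point densities and fractional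
allocation (Theorem 3, fixed-rate): for any rate `R`, fractional allocation `α`
(`α_j > 0`, `∑ α_j = 1`) and point densities `λ_j` with `∫₀¹ λ_j = 1`,
`∑_j (1/12) 2^{−2α_j R} ∫₀¹ f_j γ_j²/λ_j² ≥ (n/12)(∏_j ‖γ_j² f_j‖_{1/3})^{1/n} 2^{−2R/n}`,
where `‖u‖_{1/3} = (∫₀¹ u^{1/3})³`. -/
theorem fixed_rate_distortion_lower_bound (n : ℕ) (hn : 1 ≤ n)
    (f γ : Fin n → ℝ → ℝ)
    (hf_meas : ∀ j, Measurable (f j)) (hf_nonneg : ∀ j x, 0 ≤ f j x)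
    (hf_prob : ∀ j, (∫ x in Icc (0 : ℝ) 1, f j x) = 1)
    (hγ_meas : ∀ j, Measurable (γ j)) (hγ_nonneg : ∀ j x, 0 ≤ γ j x)
    (h13_int : ∀ j, IntegrableOn (fun t => (γ j t ^ 2 * f j t) ^ ((1 : ℝ) / 3))
      (Icc 0 1) volume)
    (h13_pos : ∀ j, 0 < ∫ t in Icc (0 : ℝ) 1, (γ j t ^ 2 * f j t) ^ ((1 : ℝ) / 3)) :
    ∀ (R : ℝ) (α : Fin n → ℝ), (∀ j, 0 < α j) → (∑ j, α j) = 1 →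
    ∀ lam : Fin n → ℝ → ℝ, (∀ j, Measurable (lam j)) → (∀ j x, 0 ≤ lam j x) →
      (∀ j, (∫ t in Icc (0 : ℝ) 1, lam j t) = 1) →
      ENNReal.ofReal (((n : ℝ) / 12) *
          (∏ j, (∫ t in Icc (0 : ℝ) 1, (γ j t ^ 2 * f j t) ^ ((1 : ℝ) / 3)) ^ 3) ^
            ((1 : ℝ) / n) *
          (2 : ℝ) ^ (-2 * R / n)) ≤
        ∑ j, ENNReal.ofReal ((1 / 12) * (2 : ℝ) ^ (-2 * α j * R)) *
          ∫⁻ x in Icc (0 : ℝ) 1,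
            ENNReal.ofReal (f j x * γ j x ^ 2) / (ENNReal.ofReal (lam j x)) ^ 2 :=
  fixed_rate_distortion_lower_bound_general n f γ hf_nonneg h13_int
end

section
/- Let p₀, p₁ > 0 with p₀ + p₁ = 1, let f₀, f₁ be probability densities on [0,1], and let γ₀, γ₁ : [0,1] → [0,∞) be measurable. Define f := p₀·f₀ + p₁·f₁ and define γ : [0,1] → [0,∞) on {f > 0} by γ(x)² := ( p₀·f₀(x)·γ₀(x)² + p₁·f₁(x)·γ₁(x)² ) / f(x) (and γ(x) := 0 where f(x) = 0). Then p₀·‖γ₀²·f₀‖_{1/3} + p₁·‖γ₁²·f₁‖_{1/3} ≥ (1/4)·‖γ²·f‖_{1/3}, where ‖u‖_{1/3} := (∫_0^1 u(t)^{1/3} dt)³. -/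
/-!
Where `f ≠ 0` the definition of `γ` says exactly `γ² f = p₀ γ₀² f₀ + p₁ γ₁² f₁`, and where
`f = 0` the left side vanishes, so `γ² f ≤ p₀ γ₀² f₀ + p₁ γ₁² f₁` everywhere. The `L^{1/3}`
quasinorm is monotone, homogeneous, and satisfies the quasi-triangle inequality
`‖u + v‖_{1/3} ≤ 4 (‖u‖_{1/3} + ‖v‖_{1/3})`: the cube root is subadditive pointwise, and
`(a + b)³ ≤ 4 (a³ + b³)` by the power mean inequality.
-/

open MeasureTheory Set
open scoped ENNReal

theorem ENNReal.add_pow_le (a b : ℝ≥0∞) (n : ℕ) :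
    (a + b) ^ n ≤ 2 ^ (n - 1) * (a ^ n + b ^ n) := by
  rcases Nat.eq_zero_or_pos n with rfl | hn
  · simp
  have h := ENNReal.rpow_add_le_mul_rpow_add_rpow a b (p := n) (Nat.one_le_cast.mpr hn)
  simpa only [← Nat.cast_pred hn, ENNReal.rpow_natCast] using h

theorem sq_mul_nonneg_and_le_of_sq_eq_div {g F m : ℝ} (hm : 0 ≤ m)
    (h : F ≠ 0 → g ^ 2 = m / F) : 0 ≤ g ^ 2 * F ∧ g ^ 2 * F ≤ m := by
  rcases eq_or_ne F 0 with hF | hF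
  · simp [hF, hm]
  · rw [h hF, div_mul_cancel₀ _ hF]
    exact ⟨hm, le_rfl⟩

section RootQuasinorm

variable {α : Type*} [MeasurableSpace α] (μ : Measure α) (n : ℕ)

/-- The `L^{1/n}` quasinorm `‖u‖_{1/n}`. -/
noncomputable def rootQuasinorm (u : α → ℝ≥0∞) : ℝ≥0∞ :=
  (∫⁻ x, u x ^ (n⁻¹ : ℝ) ∂μ) ^ n

variable {μ n}

theorem rootQuasinorm_ofReal {g : α → ℝ} (hg : ∀ x, 0 ≤ g x) :
    rootQuasinorm μ n (fun x => ENNReal.ofReal (g x)) =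
      (∫⁻ x, ENNReal.ofReal (g x ^ (n⁻¹ : ℝ)) ∂μ) ^ n := by
  unfold rootQuasinorm
  congr 1
  exact lintegral_congr fun x => ENNReal.ofReal_rpow_of_nonneg (hg x) (inv_nonneg.2 n.cast_nonneg)

theorem rootQuasinorm_mono {u v : α → ℝ≥0∞} (h : u ≤ v) :
    rootQuasinorm μ n u ≤ rootQuasinorm μ n v := by
  unfold rootQuasinorm
  gcongr with x
  exact h x

theorem rootQuasinorm_const_mul (hn : n ≠ 0) {c : ℝ≥0∞} (hc : c ≠ ∞) (u : α → ℝ≥0∞) :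
    rootQuasinorm μ n (fun x => c * u x) = c * rootQuasinorm μ n u := by
  have hc' : c ^ (n⁻¹ : ℝ) ≠ ∞ := ENNReal.rpow_ne_top_of_nonneg (by positivity) hc
  unfold rootQuasinorm
  rw [lintegral_congr fun x => ENNReal.mul_rpow_of_nonneg c (u x) (inv_nonneg.2 n.cast_nonneg),
    lintegral_const_mul' _ _ hc', mul_pow, ENNReal.rpow_inv_natCast_pow hn]

theorem rootQuasinorm_add_le {u : α → ℝ≥0∞} (hu : AEMeasurable u μ) (v : α → ℝ≥0∞) :
    rootQuasinorm μ n (u + v) ≤ 2 ^ (n - 1) * (rootQuasinorm μ n u + rootQuasinorm μ n v) := by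
  have hsub : ∫⁻ x, (u + v) x ^ (n⁻¹ : ℝ) ∂μ ≤
      ∫⁻ x, u x ^ (n⁻¹ : ℝ) ∂μ + ∫⁻ x, v x ^ (n⁻¹ : ℝ) ∂μ := by
    rw [← lintegral_add_left' (hu.pow_const _)]
    exact lintegral_mono fun x =>
      ENNReal.rpow_add_le_add_rpow _ _ (inv_nonneg.2 n.cast_nonneg) (Nat.cast_inv_le_one n)
  exact (pow_le_pow_left' hsub n).trans (ENNReal.add_pow_le _ _ n)

theorem rootQuasinorm_le_of_le_mul_add_mul (hn : n ≠ 0) {u v w : α → ℝ≥0∞}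
    (hv : AEMeasurable v μ) {a b : ℝ≥0∞} (ha : a ≠ ∞) (hb : b ≠ ∞)
    (h : ∀ x, u x ≤ a * v x + b * w x) :
    rootQuasinorm μ n u ≤ 2 ^ (n - 1) * (a * rootQuasinorm μ n v + b * rootQuasinorm μ n w) := by
  calc rootQuasinorm μ n u
      ≤ rootQuasinorm μ n ((fun x => a * v x) + fun x => b * w x) := rootQuasinorm_mono h
    _ ≤ _ := rootQuasinorm_add_le (hv.const_mul a) _
    _ = _ := by rw [rootQuasinorm_const_mul hn ha, rootQuasinorm_const_mul hn hb]

end RootQuasinorm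

theorem chatting_fixed_rate_factor_four_general (p₀ p₁ : ℝ) (hp₀ : 0 < p₀) (hp₁ : 0 < p₁)
    (f₀ f₁ : ℝ → ℝ) (hf₀_meas : Measurable f₀)
    (hf₀_nonneg : ∀ x, 0 ≤ f₀ x) (hf₁_nonneg : ∀ x, 0 ≤ f₁ x)
    (γ₀ γ₁ : ℝ → ℝ) (hγ₀_meas : Measurable γ₀)
    (f : ℝ → ℝ)
    (γ : ℝ → ℝ)
    (hγ : ∀ x, (f x = 0 → γ x = 0) ∧
      (f x ≠ 0 → γ x ^ 2 = (p₀ * f₀ x * γ₀ x ^ 2 + p₁ * f₁ x * γ₁ x ^ 2) / f x)) :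
    (1 / 4 : ENNReal) *
        (∫⁻ t in Icc (0 : ℝ) 1, ENNReal.ofReal ((γ t ^ 2 * f t) ^ ((1 : ℝ) / 3))) ^ 3 ≤
      ENNReal.ofReal p₀ *
          (∫⁻ t in Icc (0 : ℝ) 1, ENNReal.ofReal ((γ₀ t ^ 2 * f₀ t) ^ ((1 : ℝ) / 3))) ^ 3 +
        ENNReal.ofReal p₁ *
          (∫⁻ t in Icc (0 : ℝ) 1, ENNReal.ofReal ((γ₁ t ^ 2 * f₁ t) ^ ((1 : ℝ) / 3))) ^ 3 := by
  have hu₀ : ∀ t, 0 ≤ γ₀ t ^ 2 * f₀ t := fun t => by have := hf₀_nonneg t; positivity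
  have hu₁ : ∀ t, 0 ≤ γ₁ t ^ 2 * f₁ t := fun t => by have := hf₁_nonneg t; positivity
  have hu : ∀ t, 0 ≤ γ t ^ 2 * f t ∧
      γ t ^ 2 * f t ≤ p₀ * f₀ t * γ₀ t ^ 2 + p₁ * f₁ t * γ₁ t ^ 2 := fun t =>
    sq_mul_nonneg_and_le_of_sq_eq_div (by nlinarith [hu₀ t, hu₁ t]) (hγ t).2
  have hle : ∀ t, ENNReal.ofReal (γ t ^ 2 * f t) ≤ ENNReal.ofReal p₀ *
      ENNReal.ofReal (γ₀ t ^ 2 * f₀ t) + ENNReal.ofReal p₁ * ENNReal.ofReal (γ₁ t ^ 2 * f₁ t) :=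
    fun t => by
      rw [← ENNReal.ofReal_mul hp₀.le, ← ENNReal.ofReal_mul hp₁.le,
        ← ENNReal.ofReal_add (mul_nonneg hp₀.le (hu₀ t)) (mul_nonneg hp₁.le (hu₁ t))]
      exact ENNReal.ofReal_le_ofReal ((hu t).2.trans_eq (by ring))
  have hquasi := rootQuasinorm_le_of_le_mul_add_mul (μ := volume.restrict (Icc (0 : ℝ) 1))
    three_ne_zero (by fun_prop) ENNReal.ofReal_ne_top ENNReal.ofReal_ne_top hle
  rw [show (1 : ℝ) / 3 = ((3 : ℕ) : ℝ)⁻¹ by norm_num, ← rootQuasinorm_ofReal fun t => (hu t).1,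
    ← rootQuasinorm_ofReal hu₀, ← rootQuasinorm_ofReal hu₁, one_div, mul_comm, ← div_eq_mul_inv]
  exact ENNReal.div_le_of_le_mul' (hquasi.trans_eq (by norm_num))

/-- Theorem 7 (chatting encoders, fixed rate): with `f = p₀ f₀ + p₁ f₁` and the
unconditional sensitivity `γ` given by `γ² f = p₀ f₀ γ₀² + p₁ f₁ γ₁²`, one has
`p₀ ‖γ₀² f₀‖_{1/3} + p₁ ‖γ₁² f₁‖_{1/3} ≥ (1/4) ‖γ² f‖_{1/3}`, where
`‖u‖_{1/3} = (∫₀¹ u^{1/3})³` (integrals valued in `[0,∞]`): one chatting bit reduces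
the fixed-rate distortion contribution by at most a factor of 4. -/
theorem chatting_fixed_rate_factor_four (p₀ p₁ : ℝ) (hp₀ : 0 < p₀) (hp₁ : 0 < p₁)
    (hp : p₀ + p₁ = 1)
    (f₀ f₁ : ℝ → ℝ) (hf₀_meas : Measurable f₀) (hf₁_meas : Measurable f₁)
    (hf₀_nonneg : ∀ x, 0 ≤ f₀ x) (hf₁_nonneg : ∀ x, 0 ≤ f₁ x)
    (hf₀_prob : (∫ x in Icc (0 : ℝ) 1, f₀ x) = 1)
    (hf₁_prob : (∫ x in Icc (0 : ℝ) 1, f₁ x) = 1)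
    (γ₀ γ₁ : ℝ → ℝ) (hγ₀_meas : Measurable γ₀) (hγ₁_meas : Measurable γ₁)
    (hγ₀_nonneg : ∀ x, 0 ≤ γ₀ x) (hγ₁_nonneg : ∀ x, 0 ≤ γ₁ x)
    (f : ℝ → ℝ) (hf : ∀ x, f x = p₀ * f₀ x + p₁ * f₁ x)
    (γ : ℝ → ℝ) (hγ_nonneg : ∀ x, 0 ≤ γ x)
    (hγ : ∀ x, (f x = 0 → γ x = 0) ∧
      (f x ≠ 0 → γ x ^ 2 = (p₀ * f₀ x * γ₀ x ^ 2 + p₁ * f₁ x * γ₁ x ^ 2) / f x)) :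
    (1 / 4 : ENNReal) *
        (∫⁻ t in Icc (0 : ℝ) 1, ENNReal.ofReal ((γ t ^ 2 * f t) ^ ((1 : ℝ) / 3))) ^ 3 ≤
      ENNReal.ofReal p₀ *
          (∫⁻ t in Icc (0 : ℝ) 1, ENNReal.ofReal ((γ₀ t ^ 2 * f₀ t) ^ ((1 : ℝ) / 3))) ^ 3 +
        ENNReal.ofReal p₁ *
          (∫⁻ t in Icc (0 : ℝ) 1, ENNReal.ofReal ((γ₁ t ^ 2 * f₁ t) ^ ((1 : ℝ) / 3))) ^ 3 :=
  chatting_fixed_rate_factor_four_general p₀ p₁ hp₀ hp₁ f₀ f₁ hf₀_meas hf₀_nonneg hf₁_nonneg γ₀ γ₁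
    hγ₀_meas f γ hγ
end
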